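/- arXiv:math/0411545 — 5 statements merged into one kernel-verified Lean document; each statement's English description precedes it below -/
import Mathlib

section
/- Let u and v be vectors in ℝ² with ‖u‖ ≤ ‖v‖, and let θ be the angle between u and u+v. Then ‖u+v‖ - ‖v‖ = ((u+v)·u)/‖u+v‖ - (‖u‖²/‖v‖) · sin²θ / (1 + √(1 - (‖u‖²/‖v‖²) sin²θ)). -/
open Real InnerProductGeometry

lemma aux_drift (nu nv nw ip s2 : ℝ) (hnu : 0 < nu) (hnv : 0 < nv) (hnw : 0 < nw)
    (hip : ip ≤ nw ^ 2) (hv2 : nv ^ 2 = nw ^ 2 - 2 * ip + nu ^ 2)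
    (hs2 : s2 = 1 - (ip / (nu * nw)) ^ 2) :
    nw - nv = ip / nw - nu ^ 2 / nv * s2 / (1 + Real.sqrt (1 - nu ^ 2 / nv ^ 2 * s2)) := by
  have hA : (0:ℝ) ≤ nw ^ 2 - ip := by linarith
  have hS : 1 - nu ^ 2 / nv ^ 2 * s2 = ((nw ^ 2 - ip) / (nv * nw)) ^ 2 := by
    rw [hs2]
    field_simp
    linear_combination (nw^2) * hv2
  have hsqrt : Real.sqrt (1 - nu ^ 2 / nv ^ 2 * s2) = (nw ^ 2 - ip) / (nv * nw) := by
    rw [hS, Real.sqrt_sq (div_nonneg hA (by positivity))]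
  rw [hsqrt, hs2]
  have hD : 0 < nv * nw + (nw ^ 2 - ip) := by positivity
  have h1 : 1 + (nw ^ 2 - ip) / (nv * nw) = (nv * nw + (nw ^ 2 - ip)) / (nv * nw) := by
    field_simp
  rw [h1]
  rw [div_div_eq_mul_div]
  field_simp
  linear_combination (-(nw^2))*hv2

/-- For vectors `u v` in the Euclidean plane with `‖u‖ ≤ ‖v‖`,
letting `θ` be the angle between `u` and `u + v`,
`‖u+v‖ - ‖v‖ = ((u+v)·u)/‖u+v‖ - (‖u‖²/‖v‖)·sin²θ/(1 + √(1 - (‖u‖²/‖v‖²) sin²θ))`. -/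
theorem initial_drift_norm_add_sub_norm
    (u v : EuclideanSpace ℝ (Fin 2)) (hv : v ≠ 0) (huv : u + v ≠ 0)
    (h : ‖u‖ ≤ ‖v‖) :
    ‖u + v‖ - ‖v‖ =
      (inner ℝ (u + v) u : ℝ) / ‖u + v‖ -
        ‖u‖ ^ 2 / ‖v‖ * Real.sin (angle u (u + v)) ^ 2 /
          (1 + Real.sqrt (1 - ‖u‖ ^ 2 / ‖v‖ ^ 2 * Real.sin (angle u (u + v)) ^ 2)) := by
  by_cases hu : u = 0
  · subst hu; simp
  · have hnu : 0 < ‖u‖ := norm_pos_iff.mpr hu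
    have hnv : 0 < ‖v‖ := norm_pos_iff.mpr hv
    have hnw : 0 < ‖u + v‖ := norm_pos_iff.mpr huv
    set ip : ℝ := inner ℝ u (u + v) with hip_def
    have hcomm : (inner ℝ (u + v) u : ℝ) = ip := real_inner_comm _ _
    have hcos : Real.cos (angle u (u + v)) = ip / (‖u‖ * ‖u + v‖) := cos_angle u (u + v)
    have hsin2 : Real.sin (angle u (u + v)) ^ 2 = 1 - (ip / (‖u‖ * ‖u + v‖)) ^ 2 := by
      have := Real.sin_sq_add_cos_sq (angle u (u + v))
      rw [hcos] at this; linarith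
    have hv2 : ‖v‖ ^ 2 = ‖u + v‖ ^ 2 - 2 * ip + ‖u‖ ^ 2 := by
      have hveq : v = (u + v) - u := by abel
      have := norm_sub_sq_real (u + v) u
      rw [← hveq] at this
      rw [this, real_inner_comm]
    have hiuv : ip = ‖u‖ ^ 2 + inner ℝ u v := by
      rw [hip_def, inner_add_right, real_inner_self_eq_norm_sq]
    have hnw2 : ‖u + v‖ ^ 2 = ‖u‖ ^ 2 + 2 * inner ℝ u v + ‖v‖ ^ 2 := norm_add_sq_real u v
    have hcs : |(inner ℝ u v : ℝ)| ≤ ‖u‖ * ‖v‖ := abs_real_inner_le_norm u v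
    have hip : ip ≤ ‖u + v‖ ^ 2 := by
      rw [hiuv, hnw2]
      have := abs_le.mp hcs
      nlinarith
    rw [hcomm]
    exact aux_drift ‖u‖ ‖v‖ ‖u + v‖ ip _ hnu hnv hnw hip hv2 hsin2
end

section
/- Let γ be a C² Jordan curve, s ∈ γ, and for small r > 0 let x₀ and x₁ be the two intersection points of γ with the circle ∂B(s,r), with x₀, s, x₁ counterclockwise. Let s' be the intersection point of the tangent lines T_{x₀}γ and T_{x₁}γ, and let θ₀, θ₁ be the oriented angles between the positive horizontal axis and the rays [s',x₀) and [s',x₁) respectively. Then lim_{r→0} sin(θ₀ − θ₁)/(2r) = ξ_γ(s), the curvature of γ at s. -/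
open Real

lemma sqrt_sq_add_sq_dist (A B C D : ℝ) :
    |Real.sqrt (A^2+B^2) - Real.sqrt (C^2+D^2)| ≤ |A - C| + |B - D| := by
  have h1 : Real.sqrt (A^2+B^2) = ‖(⟨A, B⟩ : ℂ)‖ := by
    rw [Complex.norm_def, Complex.normSq_mk]; ring_nf
  have h2 : Real.sqrt (C^2+D^2) = ‖(⟨C, D⟩ : ℂ)‖ := by
    rw [Complex.norm_def, Complex.normSq_mk]; ring_nf
  rw [h1, h2]
  calc |‖(⟨A,B⟩ : ℂ)‖ - ‖(⟨C,D⟩ : ℂ)‖| ≤ ‖(⟨A,B⟩ - ⟨C,D⟩ : ℂ)‖ :=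
        abs_norm_sub_norm_le _ _
    _ ≤ |(⟨A,B⟩ - ⟨C,D⟩ : ℂ).re| + |(⟨A,B⟩ - ⟨C,D⟩ : ℂ).im| :=
        Complex.norm_le_abs_re_add_abs_im _
    _ = |A - C| + |B - D| := rfl


set_option maxHeartbeats 1000000 in
/-- for a `C²` parametrized curve `φ = (x,y)` with `φ'(t) ≠ 0`,
with chord endpoints `x₀ = φ(t₀)`, `x₁ = φ(t₁)` (`t₀ < t < t₁`) at equal distance
`r` from `s = φ(t)`, and `θ₀, θ₁` the angles of the tangent rays at `x₀, x₁`
(so that `sin(θ₀ − θ₁) = (x'(t₀)y'(t₁) − y'(t₀)x'(t₁))/(‖φ'(t₀)‖‖φ'(t₁)‖)`),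
one has `sin(θ₀ − θ₁)/(2r) → ξ_γ(s)` as `r → 0`, where
`ξ_γ(s) = (x'y'' − x''y')/(x'² + y'²)^{3/2}` is the curvature at `s`. -/
theorem sin_angle_diff_div_radius_tendsto_curvature
    (x y : ℝ → ℝ)
    (hx : ContDiffOn ℝ 2 x (Set.Icc (-1) 1)) (hy : ContDiffOn ℝ 2 y (Set.Icc (-1) 1))
    (t : ℝ) (ht : t ∈ Set.Ioo (-1 : ℝ) 1)
    (hreg : deriv x t ^ 2 + deriv y t ^ 2 ≠ 0) :
    ∀ ε > 0, ∃ δ > 0, ∀ t₀ t₁ : ℝ,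
      t - δ < t₀ → t₀ < t → t < t₁ → t₁ < t + δ →
      Real.sqrt ((x t₀ - x t) ^ 2 + (y t₀ - y t) ^ 2) =
        Real.sqrt ((x t₁ - x t) ^ 2 + (y t₁ - y t) ^ 2) →
      |((deriv x t₀ * deriv y t₁ - deriv y t₀ * deriv x t₁) /
            (Real.sqrt (deriv x t₀ ^ 2 + deriv y t₀ ^ 2) *
              Real.sqrt (deriv x t₁ ^ 2 + deriv y t₁ ^ 2))) /
          (2 * Real.sqrt ((x t₀ - x t) ^ 2 + (y t₀ - y t) ^ 2)) -
        (deriv x t * deriv (deriv y) t - deriv (deriv x) t * deriv y t) /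
          (deriv x t ^ 2 + deriv y t ^ 2) ^ ((3 : ℝ) / 2)| < ε := by
  intro ε hε
  -- derivative facts
  have hmem := isOpen_Ioo.mem_nhds ht
  have hxO : ContDiffOn ℝ 2 x (Set.Ioo (-1:ℝ) 1) := hx.mono Set.Ioo_subset_Icc_self
  have hyO : ContDiffOn ℝ 2 y (Set.Ioo (-1:ℝ) 1) := hy.mono Set.Ioo_subset_Icc_self
  have hdx : HasDerivAt x (deriv x t) t :=
    ((hxO.differentiableOn (by norm_num)).differentiableAt hmem).hasDerivAt
  have hdy : HasDerivAt y (deriv y t) t :=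
    ((hyO.differentiableOn (by norm_num)).differentiableAt hmem).hasDerivAt
  have hddx : HasDerivAt (deriv x) (deriv (deriv x) t) t :=
    (((hxO.deriv_of_isOpen (m := 1) isOpen_Ioo (by norm_num)).differentiableOn
      one_ne_zero).differentiableAt hmem).hasDerivAt
  have hddy : HasDerivAt (deriv y) (deriv (deriv y) t) t :=
    (((hyO.deriv_of_isOpen (m := 1) isOpen_Ioo (by norm_num)).differentiableOn
      one_ne_zero).differentiableAt hmem).hasDerivAt
  set a := deriv x t with ha
  set b := deriv y t with hb
  set a2 := deriv (deriv x) t with ha2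
  set b2 := deriv (deriv y) t with hb2
  have hab : 0 < a^2 + b^2 := lt_of_le_of_ne (by positivity) (Ne.symm hreg)
  set c := Real.sqrt (a^2+b^2) with hcdef
  have hc : 0 < c := Real.sqrt_pos.mpr hab
  set M : ℝ := |a|+|b|+|a2|+|b2|+1 with hMdef
  have hM : 1 ≤ M := by
    have := abs_nonneg a; have := abs_nonneg b; have := abs_nonneg a2
    have := abs_nonneg b2; simp only [hMdef]; linarith
  set K0 : ℝ := a*b2 - a2*b with hK0
  set B : ℝ := 4*(c*(4*M+4) + 9*M*|K0|)/c^4 + 1 with hB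
  have hBpos : 0 < B := by
    have h1 : (0:ℝ) ≤ 4*(c*(4*M+4) + 9*M*|K0|)/c^4 := by positivity
    rw [hB]; linarith
  set η : ℝ := min (min (c/(8*M)) 1) (ε/B) with hηdef
  have hηpos : 0 < η := by
    apply lt_min (lt_min (by positivity) one_pos) (by positivity)
  have hη1 : η ≤ 1 := le_trans (min_le_left _ _) (min_le_right _ _)
  have hηc : η * (8*M) ≤ c := by
    have h1 : η ≤ c/(8*M) := le_trans (min_le_left _ _) (min_le_left _ _)
    have h8 : (0:ℝ) < 8*M := by linarith
    calc η * (8*M) ≤ (c/(8*M)) * (8*M) := mul_le_mul_of_nonneg_right h1 h8.le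
      _ = c := by field_simp
  have hηε : η ≤ ε/B := min_le_right _ _
  clear_value a b a2 b2 c M K0 B η
  -- extract δ from little-o
  have Ex := (hasDerivAt_iff_isLittleO.mp hdx).def hηpos
  have Ey := (hasDerivAt_iff_isLittleO.mp hdy).def hηpos
  have Ex2 := (hasDerivAt_iff_isLittleO.mp hddx).def hηpos
  have Ey2 := (hasDerivAt_iff_isLittleO.mp hddy).def hηpos
  obtain ⟨δ₀, hδ₀, hball⟩ := Metric.eventually_nhds_iff.mp (((Ex.and Ey).and (Ex2.and Ey2)))
  refine ⟨min (min δ₀ 1) η, lt_min (lt_min hδ₀ one_pos) hηpos, ?_⟩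
  intro t₀ t₁ h1 h2 h3 h4 hrkey
  set δ := min (min δ₀ 1) η with hδdef
  have hδ1 : δ ≤ 1 := le_trans (min_le_left _ _) (min_le_right _ _)
  have hδη : δ ≤ η := min_le_right _ _
  have hδ0' : δ ≤ δ₀ := le_trans (min_le_left _ _) (min_le_left _ _)
  set p := t - t₀ with hp'
  set q := t₁ - t with hq'
  clear_value δ p q
  have hp : 0 < p := by simp only [hp']; linarith
  have hq : 0 < q := by simp only [hq']; linarith
  have hpδ : p < δ := by simp only [hp']; linarith
  have hqδ : q < δ := by simp only [hq']; linarith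
  have hpη : p ≤ η := le_trans hpδ.le hδη
  have hqη : q ≤ η := le_trans hqδ.le hδη
  have hp1 : p ≤ 1 := le_trans hpδ.le hδ1
  have hq1 : q ≤ 1 := le_trans hqδ.le hδ1
  -- apply the ball estimates
  have H0 := hball (show dist t₀ t < δ₀ by
    rw [Real.dist_eq, abs_of_neg (by linarith : t₀ - t < 0)]; linarith)
  have H1 := hball (show dist t₁ t < δ₀ by
    rw [Real.dist_eq, abs_of_pos (by linarith : (0:ℝ) < t₁ - t)]; linarith)
  simp only [Real.norm_eq_abs, smul_eq_mul] at H0 H1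
  have habs0 : |t₀ - t| = p := by rw [abs_of_neg (by linarith : t₀ - t < 0)]; simp [hp']
  have habs1 : |t₁ - t| = q := by
    rw [abs_of_pos (by linarith : (0:ℝ) < t₁ - t), hq']
  rw [habs0] at H0; rw [habs1] at H1
  obtain ⟨⟨i0x, i0y⟩, ⟨i0dx, i0dy⟩⟩ := H0
  obtain ⟨⟨i1x, i1y⟩, ⟨i1dx, i1dy⟩⟩ := H1
  rw [← ha] at i0dx i1dx
  rw [← hb] at i0dy i1dy
  -- i0x : |x t₀ - x t - (t₀ - t) * a| ≤ η * p, etc.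
  set r₀ := Real.sqrt ((x t₀ - x t)^2 + (y t₀ - y t)^2) with hr0def
  set r₁ := Real.sqrt ((x t₁ - x t)^2 + (y t₁ - y t)^2) with hr1def
  set s₀ := Real.sqrt (deriv x t₀^2 + deriv y t₀^2) with hs0def
  set s₁ := Real.sqrt (deriv x t₁^2 + deriv y t₁^2) with hs1def
  set N := deriv x t₀ * deriv y t₁ - deriv y t₀ * deriv x t₁ with hNdef
  clear_value r₀ r₁ s₀ s₁ N
  -- chord length estimates
  have hch : ∀ h : ℝ, Real.sqrt ((h*a)^2 + (h*b)^2) = c * |h| := by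
    intro h
    rw [show (h*a)^2+(h*b)^2 = (a^2+b^2)*h^2 by ring, Real.sqrt_mul hab.le,
      Real.sqrt_sq_eq_abs, hcdef]
  have hr0b : |r₀ - c * p| ≤ 2*η*p := by
    have h5 := sqrt_sq_add_sq_dist (x t₀ - x t) (y t₀ - y t) ((t₀-t)*a) ((t₀-t)*b)
    rw [hch (t₀-t), habs0, ← hr0def] at h5
    calc |r₀ - c*p| ≤ |x t₀ - x t - (t₀-t)*a| + |y t₀ - y t - (t₀-t)*b| := h5
      _ ≤ η*p + η*p := add_le_add i0x i0y
      _ = 2*η*p := by ring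
  have hr1b : |r₁ - c * q| ≤ 2*η*q := by
    have h5 := sqrt_sq_add_sq_dist (x t₁ - x t) (y t₁ - y t) ((t₁-t)*a) ((t₁-t)*b)
    rw [hch (t₁-t), habs1, ← hr1def] at h5
    calc |r₁ - c*q| ≤ |x t₁ - x t - (t₁-t)*a| + |y t₁ - y t - (t₁-t)*b| := h5
      _ ≤ η*q + η*q := add_le_add i1x i1y
      _ = 2*η*q := by ring
  have hRb : |(r₀ + r₁) - c*(p+q)| ≤ 2*η*(p+q) := by
    have h6 := abs_le.mp hr0b
    have h7 := abs_le.mp hr1b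
    rw [abs_le]; constructor <;> linarith [h6.1, h6.2, h7.1, h7.2]
  have hη8 : 8*η ≤ c := by linarith [hηc, mul_nonneg (sub_nonneg.mpr hM) hηpos.le]
  have hRlow : (c/2)*(p+q) ≤ r₀ + r₁ := by
    have h6 := (abs_le.mp hRb).1
    linarith [h6, mul_nonneg (by linarith : (0:ℝ) ≤ c/2 - 2*η) (by linarith : (0:ℝ) ≤ p+q)]
  have hRpos : 0 < r₀ + r₁ := lt_of_lt_of_le (by positivity) hRlow
  -- tangent direction estimates
  have hu0 : |deriv x t₀ - a| ≤ M*η := by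
    have h5 : |deriv x t₀ - a| ≤ |deriv x t₀ - a - (t₀-t)*a2| + |t₀-t| * |a2| := by
      calc |deriv x t₀ - a| = |(deriv x t₀ - a - (t₀-t)*a2) + (t₀-t)*a2| := by ring_nf
        _ ≤ |deriv x t₀ - a - (t₀-t)*a2| + |(t₀-t)*a2| := abs_add_le _ _
        _ = |deriv x t₀ - a - (t₀-t)*a2| + |t₀-t| * |a2| := by rw [abs_mul]
    rw [habs0] at h5
    have hMa : |a2| + 1 ≤ M := by
      simp only [hMdef]
      linarith only [abs_nonneg a, abs_nonneg b, abs_nonneg b2]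
    linarith only [h5, i0dx, hMa,
      mul_le_mul_of_nonneg_right hpη (abs_nonneg a2),
      mul_le_mul_of_nonneg_left hp1 hηpos.le,
      mul_le_mul_of_nonneg_left hMa hηpos.le]
  have hv0 : |deriv y t₀ - b| ≤ M*η := by
    have h5 : |deriv y t₀ - b| ≤ |deriv y t₀ - b - (t₀-t)*b2| + |t₀-t| * |b2| := by
      calc |deriv y t₀ - b| = |(deriv y t₀ - b - (t₀-t)*b2) + (t₀-t)*b2| := by ring_nf
        _ ≤ |deriv y t₀ - b - (t₀-t)*b2| + |(t₀-t)*b2| := abs_add_le _ _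
        _ = |deriv y t₀ - b - (t₀-t)*b2| + |t₀-t| * |b2| := by rw [abs_mul]
    rw [habs0] at h5
    have hMb : |b2| + 1 ≤ M := by
      simp only [hMdef]
      linarith only [abs_nonneg a, abs_nonneg b, abs_nonneg a2]
    linarith only [h5, i0dy, hMb,
      mul_le_mul_of_nonneg_right hpη (abs_nonneg b2),
      mul_le_mul_of_nonneg_left hp1 hηpos.le,
      mul_le_mul_of_nonneg_left hMb hηpos.le]
  have hu1 : |deriv x t₁ - a| ≤ M*η := by
    have h5 : |deriv x t₁ - a| ≤ |deriv x t₁ - a - (t₁-t)*a2| + |t₁-t| * |a2| := by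
      calc |deriv x t₁ - a| = |(deriv x t₁ - a - (t₁-t)*a2) + (t₁-t)*a2| := by ring_nf
        _ ≤ |deriv x t₁ - a - (t₁-t)*a2| + |(t₁-t)*a2| := abs_add_le _ _
        _ = |deriv x t₁ - a - (t₁-t)*a2| + |t₁-t| * |a2| := by rw [abs_mul]
    rw [habs1] at h5
    have hMa : |a2| + 1 ≤ M := by
      simp only [hMdef]
      linarith only [abs_nonneg a, abs_nonneg b, abs_nonneg b2]
    linarith only [h5, i1dx, hMa,
      mul_le_mul_of_nonneg_right hqη (abs_nonneg a2),
      mul_le_mul_of_nonneg_left hq1 hηpos.le,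
      mul_le_mul_of_nonneg_left hMa hηpos.le]
  have hv1 : |deriv y t₁ - b| ≤ M*η := by
    have h5 : |deriv y t₁ - b| ≤ |deriv y t₁ - b - (t₁-t)*b2| + |t₁-t| * |b2| := by
      calc |deriv y t₁ - b| = |(deriv y t₁ - b - (t₁-t)*b2) + (t₁-t)*b2| := by ring_nf
        _ ≤ |deriv y t₁ - b - (t₁-t)*b2| + |(t₁-t)*b2| := abs_add_le _ _
        _ = |deriv y t₁ - b - (t₁-t)*b2| + |t₁-t| * |b2| := by rw [abs_mul]
    rw [habs1] at h5
    have hMb : |b2| + 1 ≤ M := by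
      simp only [hMdef]
      linarith only [abs_nonneg a, abs_nonneg b, abs_nonneg a2]
    linarith only [h5, i1dy, hMb,
      mul_le_mul_of_nonneg_right hqη (abs_nonneg b2),
      mul_le_mul_of_nonneg_left hq1 hηpos.le,
      mul_le_mul_of_nonneg_left hMb hηpos.le]
  have hs0b : |s₀ - c| ≤ 2*M*η := by
    have h5 := sqrt_sq_add_sq_dist (deriv x t₀) (deriv y t₀) a b
    rw [← hcdef, ← hs0def] at h5
    calc |s₀ - c| ≤ |deriv x t₀ - a| + |deriv y t₀ - b| := h5
      _ ≤ M*η + M*η := add_le_add hu0 hv0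
      _ = 2*M*η := by ring
  have hs1b : |s₁ - c| ≤ 2*M*η := by
    have h5 := sqrt_sq_add_sq_dist (deriv x t₁) (deriv y t₁) a b
    rw [← hcdef, ← hs1def] at h5
    calc |s₁ - c| ≤ |deriv x t₁ - a| + |deriv y t₁ - b| := h5
      _ ≤ M*η + M*η := add_le_add hu1 hv1
      _ = 2*M*η := by ring
  have hMη : 2*M*η ≤ c/4 := by linarith only [hηc]
  have hs0r := abs_le.mp hs0b
  have hs1r := abs_le.mp hs1b
  have hs0low : 3*c/4 ≤ s₀ := by linarith [hs0r.1]
  have hs0high : s₀ ≤ 5*c/4 := by linarith [hs0r.2]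
  have hs1low : 3*c/4 ≤ s₁ := by linarith [hs1r.1]
  have hs1high : s₁ ≤ 5*c/4 := by linarith [hs1r.2]
  have hDlow : c^2/2 ≤ s₀*s₁ := by nlinarith only [hc, hs0low, hs1low, hs0high, hs1high]
  have hDhigh : s₀*s₁ ≤ 2*c^2 := by nlinarith only [hc, hs0low, hs1low, hs0high, hs1high]
  have hDpos : 0 < s₀*s₁ := lt_of_lt_of_le (by positivity) hDlow
  have hDerr : |s₀*s₁ - c^2| ≤ 5*M*c*η := by
    rw [abs_le]; constructor <;>
      nlinarith only [hs0r.1, hs0r.2, hs1r.1, hs1r.2, hMη, hc, hηpos, hs1high, hs1low,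
        mul_nonneg (mul_nonneg (by linarith only [hM] : (0:ℝ) ≤ M) hc.le) hηpos.le]
  -- numerator estimate
  have hNb : |N - K0*(q+p)| ≤ (4*M+4)*η*(p+q) := by
    set E0 := deriv x t₀ - a - (t₀-t)*a2 with hE0
    set F0 := deriv y t₀ - b - (t₀-t)*b2 with hF0
    set E1 := deriv x t₁ - a - (t₁-t)*a2 with hE1
    set F1 := deriv y t₁ - b - (t₁-t)*b2 with hF1
    have hdec : N - K0*(q+p) =
        E0*(b+(t₁-t)*b2) + (a+(t₀-t)*a2)*F1 + E0*F1
        - F0*(a+(t₁-t)*a2) - (b+(t₀-t)*b2)*E1 - F0*E1 := by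
      simp only [hE0, hF0, hE1, hF1, hNdef, hK0, hq', hp']; ring
    have hBb1 : |b+(t₁-t)*b2| ≤ M := by
      calc |b+(t₁-t)*b2| ≤ |b| + |t₁-t| * |b2| := by
            refine (abs_add_le _ _).trans ?_; rw [abs_mul]
        _ ≤ M := by
            rw [habs1]; simp only [hMdef]
            linarith only [mul_le_of_le_one_left (abs_nonneg b2) hq1, abs_nonneg a, abs_nonneg a2]
    have hBb0 : |b+(t₀-t)*b2| ≤ M := by
      calc |b+(t₀-t)*b2| ≤ |b| + |t₀-t| * |b2| := by
            refine (abs_add_le _ _).trans ?_; rw [abs_mul]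
        _ ≤ M := by
            rw [habs0]; simp only [hMdef]
            linarith only [mul_le_of_le_one_left (abs_nonneg b2) hp1, abs_nonneg a, abs_nonneg a2]
    have hAa0 : |a+(t₀-t)*a2| ≤ M := by
      calc |a+(t₀-t)*a2| ≤ |a| + |t₀-t| * |a2| := by
            refine (abs_add_le _ _).trans ?_; rw [abs_mul]
        _ ≤ M := by
            rw [habs0]; simp only [hMdef]
            linarith only [mul_le_of_le_one_left (abs_nonneg a2) hp1, abs_nonneg b, abs_nonneg b2]
    have hAa1 : |a+(t₁-t)*a2| ≤ M := by
      calc |a+(t₁-t)*a2| ≤ |a| + |t₁-t| * |a2| := by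
            refine (abs_add_le _ _).trans ?_; rw [abs_mul]
        _ ≤ M := by
            rw [habs1]; simp only [hMdef]
            linarith only [mul_le_of_le_one_left (abs_nonneg a2) hq1, abs_nonneg b, abs_nonneg b2]
    have T1 : |E0*(b+(t₁-t)*b2)| ≤ (η*p)*M := by
      rw [abs_mul]; exact mul_le_mul i0dx hBb1 (abs_nonneg _) (by positivity)
    have T2 : |(a+(t₀-t)*a2)*F1| ≤ M*(η*q) := by
      rw [abs_mul]
      exact mul_le_mul hAa0 i1dy (abs_nonneg _) (by linarith only [hM])
    have T3 : |E0*F1| ≤ (η*p)*(η*q) := by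
      rw [abs_mul]
      exact mul_le_mul i0dx i1dy (abs_nonneg _) (by positivity)
    have T4 : |F0*(a+(t₁-t)*a2)| ≤ (η*p)*M := by
      rw [abs_mul]; exact mul_le_mul i0dy hAa1 (abs_nonneg _) (by positivity)
    have T5 : |(b+(t₀-t)*b2)*E1| ≤ M*(η*q) := by
      rw [abs_mul]
      exact mul_le_mul hBb0 i1dx (abs_nonneg _) (by linarith only [hM])
    have T6 : |F0*E1| ≤ (η*p)*(η*q) := by
      rw [abs_mul]
      exact mul_le_mul i0dy i1dx (abs_nonneg _) (by positivity)
    have hsum : |N - K0*(q+p)| ≤ (η*p)*M + M*(η*q) + (η*p)*(η*q)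
        + ((η*p)*M + M*(η*q) + (η*p)*(η*q)) := by
      rw [hdec]
      have c1 := abs_sub (E0*(b+(t₁-t)*b2) + (a+(t₀-t)*a2)*F1 + E0*F1
        - F0*(a+(t₁-t)*a2) - (b+(t₀-t)*b2)*E1) (F0*E1)
      have c2 := abs_sub (E0*(b+(t₁-t)*b2) + (a+(t₀-t)*a2)*F1 + E0*F1
        - F0*(a+(t₁-t)*a2)) ((b+(t₀-t)*b2)*E1)
      have c3 := abs_sub (E0*(b+(t₁-t)*b2) + (a+(t₀-t)*a2)*F1 + E0*F1)
        (F0*(a+(t₁-t)*a2))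
      have c4 := abs_add_le (E0*(b+(t₁-t)*b2) + (a+(t₀-t)*a2)*F1) (E0*F1)
      have c5 := abs_add_le (E0*(b+(t₁-t)*b2)) ((a+(t₀-t)*a2)*F1)
      linarith [T1, T2, T3, T4, T5, T6]
    have hηq1 : η*q ≤ 1 := by
      calc η*q ≤ 1*q := mul_le_mul_of_nonneg_right hη1 hq.le
        _ ≤ 1 := by linarith only [hq1]
    have hM0 : (0:ℝ) ≤ M := by linarith only [hM]
    linarith only [hsum,
      mul_le_of_le_one_right (mul_nonneg hηpos.le hp.le) hηq1,
      mul_nonneg (mul_nonneg hM0 hηpos.le) hp.le,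
      mul_nonneg (mul_nonneg hM0 hηpos.le) hq.le,
      mul_nonneg hηpos.le hp.le, mul_nonneg hηpos.le hq.le]
  -- the rpow identity
  have hc3 : (a^2+b^2)^((3:ℝ)/2) = c^3 := by
    rw [show ((3:ℝ)/2) = (1/2)*3 by norm_num, Real.rpow_mul hab.le, ← Real.sqrt_eq_rpow,
      ← hcdef, show ((3:ℝ)) = ((3:ℕ):ℝ) by norm_num, Real.rpow_natCast]
  -- assemble
  have h2r : 2*r₀ = r₀ + r₁ := by rw [hrkey]; ring
  rw [hc3, h2r, div_div]
  have hkey : N/(s₀*s₁*(r₀+r₁)) - K0/c^3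
      = (N*c^3 - K0*(s₀*s₁*(r₀+r₁)))/((s₀*s₁*(r₀+r₁))*c^3) := by
    rw [div_sub_div _ _ (mul_pos hDpos hRpos).ne' (pow_pos hc 3).ne']
    ring
  rw [hkey, abs_div, abs_of_pos (by positivity : (0:ℝ) < (s₀*s₁*(r₀+r₁))*c^3)]
  have hRerr : |c*(q+p) - (r₀+r₁)| ≤ 2*η*(p+q) := by
    have : c*(q+p) - (r₀+r₁) = -((r₀+r₁) - c*(p+q)) := by ring
    rw [this, abs_neg]; exact hRb
  have hnum : |N*c^3 - K0*(s₀*s₁*(r₀+r₁))|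
      ≤ (η*(c^2*(c*(4*M+4) + 9*M*|K0|)))*(p+q) := by
    have hiden : N*c^3 - K0*(s₀*s₁*(r₀+r₁)) =
        c^3*(N - K0*(q+p)) + K0*(c*(c^2 - s₀*s₁)*(q+p)
          + (s₀*s₁)*(c*(q+p) - (r₀+r₁))) := by ring
    have hA : |c^3*(N - K0*(q+p))| ≤ c^3*((4*M+4)*η*(p+q)) := by
      rw [abs_mul, abs_of_pos (by positivity : (0:ℝ) < c^3)]
      exact mul_le_mul_of_nonneg_left hNb (by positivity)
    have hBB : |c*(c^2 - s₀*s₁)*(q+p)| ≤ (c*(5*M*c*η))*(q+p) := by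
      rw [abs_mul, abs_mul, abs_of_pos hc, abs_of_pos (by linarith : (0:ℝ) < q+p),
        abs_sub_comm]
      have h9 : c*|s₀*s₁ - c^2| ≤ c*(5*M*c*η) := mul_le_mul_of_nonneg_left hDerr hc.le
      exact mul_le_mul_of_nonneg_right h9 (by linarith only [hp, hq])
    have hCC : |s₀*s₁*(c*(q+p) - (r₀+r₁))| ≤ (2*c^2)*(2*η*(p+q)) := by
      rw [abs_mul, abs_of_pos hDpos]
      exact mul_le_mul hDhigh hRerr (abs_nonneg _) (by positivity)
    have habs2 : |N*c^3 - K0*(s₀*s₁*(r₀+r₁))| ≤ |c^3*(N - K0*(q+p))|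
        + |K0| * (|c*(c^2 - s₀*s₁)*(q+p)| + |s₀*s₁*(c*(q+p) - (r₀+r₁))|) := by
      rw [hiden]
      refine (abs_add_le _ _).trans ?_
      gcongr
      rw [abs_mul]
      exact mul_le_mul_of_nonneg_left (abs_add_le _ _) (abs_nonneg _)
    have hK0n := abs_nonneg K0
    have hmono := mul_le_mul_of_nonneg_left (add_le_add hBB hCC) (abs_nonneg K0)
    have hgap : 0 ≤ ((M-1)*|K0|)*((c^2*η)*(p+q)) :=
      mul_nonneg (mul_nonneg (by linarith only [hM]) (abs_nonneg K0))
        (mul_nonneg (mul_nonneg (sq_nonneg c) hηpos.le) (by linarith only [hp, hq]))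
    linarith only [habs2, hA, hmono, hgap]
  have hden : (c^6/4)*(p+q) ≤ (s₀*s₁*(r₀+r₁))*c^3 := by
    have h10 : (c^2/2)*((c/2)*(p+q)) ≤ (s₀*s₁)*(r₀+r₁) :=
      mul_le_mul hDlow hRlow (by positivity) (le_trans (by positivity) hDlow)
    have h11 : (0:ℝ) < c^3 := by positivity
    linarith only [mul_le_mul_of_nonneg_right h10 h11.le]
  calc |N*c^3 - K0*(s₀*s₁*(r₀+r₁))| / ((s₀*s₁*(r₀+r₁))*c^3)
      ≤ ((η*(c^2*(c*(4*M+4) + 9*M*|K0|)))*(p+q)) / ((c^6/4)*(p+q)) :=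
        div_le_div₀ (le_trans (abs_nonneg _) hnum) hnum (by positivity) hden
    _ = η*(4*(c*(4*M+4) + 9*M*|K0|)/c^4) := by
        rw [hB] at *
        field_simp
    _ < ε := by
        have h12 : η*B ≤ ε := by
          calc η*B ≤ (ε/B)*B := mul_le_mul_of_nonneg_right hηε hBpos.le
            _ = ε := by field_simp
        have h13 : η*(4*(c*(4*M+4) + 9*M*|K0|)/c^4) = η*B - η := by rw [hB]; ring
        linarith [h13, h12, hηpos]
end

section
/- For any angles θ₀, θ₁ ∈ ℝ with sin θ₀ sin θ₁ ≤ 0, cos θ₀ cos θ₁ ≤ 0, and sin θ₀ cos θ₀ ≠ 0, the identity sin θ₁ cos θ₁ (|sin θ₁| − |cos θ₁|)/(|sin θ₁| + |cos θ₁|) − sin θ₀ cos θ₀ (|sin θ₀| − |cos θ₀|)/(|sin θ₀| + |cos θ₀|) = −sin(θ₀ − θ₁)/((|sin θ₁| + |cos θ₁|)(|sin θ₀| + |cos θ₀|)) − sgn(tan θ₀)(cos²θ₁ − cos²θ₀) holds. -/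
open Real

/-- the trigonometric identity
`sinθ₁cosθ₁(|sinθ₁|−|cosθ₁|)/(|sinθ₁|+|cosθ₁|) − sinθ₀cosθ₀(|sinθ₀|−|cosθ₀|)/(|sinθ₀|+|cosθ₀|)
  = −sin(θ₀−θ₁)/((|sinθ₁|+|cosθ₁|)(|sinθ₀|+|cosθ₀|)) − sgn(tanθ₀)(cos²θ₁−cos²θ₀)`
provided `sinθ₀ sinθ₁ ≤ 0`, `cosθ₀ cosθ₁ ≤ 0` and `sinθ₀ cosθ₀ ≠ 0`. -/
theorem drift_trig_identity (θ₀ θ₁ : ℝ)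
    (h1 : Real.sin θ₀ * Real.sin θ₁ ≤ 0)
    (h2 : Real.cos θ₀ * Real.cos θ₁ ≤ 0)
    (h3 : Real.sin θ₀ * Real.cos θ₀ ≠ 0) :
    Real.sin θ₁ * Real.cos θ₁ * (|Real.sin θ₁| - |Real.cos θ₁|) /
        (|Real.sin θ₁| + |Real.cos θ₁|) -
      Real.sin θ₀ * Real.cos θ₀ * (|Real.sin θ₀| - |Real.cos θ₀|) /
        (|Real.sin θ₀| + |Real.cos θ₀|) =
      -Real.sin (θ₀ - θ₁) /
          ((|Real.sin θ₁| + |Real.cos θ₁|) * (|Real.sin θ₀| + |Real.cos θ₀|)) -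
        Real.sign (Real.tan θ₀) * (Real.cos θ₁ ^ 2 - Real.cos θ₀ ^ 2) := by
  have hs₀ : Real.sin θ₀ ≠ 0 := fun h => h3 (by simp [h])
  have hc₀ : Real.cos θ₀ ≠ 0 := fun h => h3 (by simp [h])
  have p₀ := Real.sin_sq_add_cos_sq θ₀
  have p₁ := Real.sin_sq_add_cos_sq θ₁
  have hsd : Real.sin (θ₀ - θ₁) = Real.sin θ₀ * Real.cos θ₁ - Real.cos θ₀ * Real.sin θ₁ :=
    Real.sin_sub θ₀ θ₁
  have ht : Real.tan θ₀ = Real.sin θ₀ / Real.cos θ₀ := Real.tan_eq_sin_div_cos θ₀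
  have hA : 0 < |Real.sin θ₁| + |Real.cos θ₁| := by
    rcases eq_or_ne (Real.sin θ₁) 0 with h | h
    · have : Real.cos θ₁ ≠ 0 := by intro hc; rw [h, hc] at p₁; norm_num at p₁
      have := abs_pos.mpr this
      positivity
    · have := abs_pos.mpr h
      positivity
  rcases hs₀.lt_or_gt with hs | hs <;> rcases hc₀.lt_or_gt with hc | hc
  · -- s₀ < 0, c₀ < 0 : s₁ ≥ 0, c₁ ≥ 0, tan > 0
    have hs₁ : 0 ≤ Real.sin θ₁ := by nlinarith
    have hc₁ : 0 ≤ Real.cos θ₁ := by nlinarith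
    have hsg : Real.sign (Real.tan θ₀) = 1 := by
      rw [ht]; exact Real.sign_of_pos (div_pos_of_neg_of_neg hs hc)
    rw [abs_of_neg hs, abs_of_neg hc, abs_of_nonneg hs₁, abs_of_nonneg hc₁, hsd, hsg] at *
    have hb : (0:ℝ) < -Real.sin θ₀ + -Real.cos θ₀ := by linarith
    field_simp
    linear_combination (Real.sin θ₁ * Real.cos θ₀ + Real.cos θ₀ * Real.cos θ₁) * p₀ -
      Real.cos θ₁ * (Real.sin θ₀ + Real.cos θ₀) * p₁
  · -- s₀ < 0, c₀ > 0
    have hs₁ : 0 ≤ Real.sin θ₁ := by nlinarith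
    have hc₁ : Real.cos θ₁ ≤ 0 := by nlinarith
    have hsg : Real.sign (Real.tan θ₀) = -1 := by
      rw [ht]; exact Real.sign_of_neg (div_neg_of_neg_of_pos hs hc)
    rw [abs_of_neg hs, abs_of_pos hc, abs_of_nonneg hs₁, abs_of_nonpos hc₁, hsd, hsg] at *
    have hb : (0:ℝ) < -Real.sin θ₀ + Real.cos θ₀ := by linarith
    field_simp
    linear_combination (Real.sin θ₁ * Real.cos θ₀ - Real.cos θ₀ * Real.cos θ₁) * p₀ -
      Real.cos θ₁ * (Real.sin θ₀ - Real.cos θ₀) * p₁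
  · -- s₀ > 0, c₀ < 0
    have hs₁ : Real.sin θ₁ ≤ 0 := by nlinarith
    have hc₁ : 0 ≤ Real.cos θ₁ := by nlinarith
    have hsg : Real.sign (Real.tan θ₀) = -1 := by
      rw [ht]; exact Real.sign_of_neg (div_neg_of_pos_of_neg hs hc)
    rw [abs_of_pos hs, abs_of_neg hc, abs_of_nonpos hs₁, abs_of_nonneg hc₁, hsd, hsg] at *
    have hb : (0:ℝ) < Real.sin θ₀ + -Real.cos θ₀ := by linarith
    field_simp
    linear_combination (Real.sin θ₁ * Real.cos θ₀ - Real.cos θ₀ * Real.cos θ₁) * p₀ -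
      Real.cos θ₁ * (Real.sin θ₀ - Real.cos θ₀) * p₁
  · -- s₀ > 0, c₀ > 0
    have hs₁ : Real.sin θ₁ ≤ 0 := by nlinarith
    have hc₁ : Real.cos θ₁ ≤ 0 := by nlinarith
    have hsg : Real.sign (Real.tan θ₀) = 1 := by
      rw [ht]; exact Real.sign_of_pos (div_pos hs hc)
    rw [abs_of_pos hs, abs_of_pos hc, abs_of_nonpos hs₁, abs_of_nonpos hc₁, hsd, hsg] at *
    have hb : (0:ℝ) < Real.sin θ₀ + Real.cos θ₀ := by linarith
    field_simp
    linear_combination (Real.sin θ₁ * Real.cos θ₀ + Real.cos θ₀ * Real.cos θ₁) * p₀ -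
      Real.cos θ₁ * (Real.sin θ₀ + Real.cos θ₀) * p₁
end

section
/- Let f : [0,b] → ℝ be monotone C² and for each N let (η_N(l/N))_{0 ≤ l ≤ Nb} be independent random variables with geometric laws: P(η_N(l/N) = m/N) = |f'(l/N)|^{|m|} (1+|f'(l/N)|)^{-|m|-1} for m ≥ 0 (f nondecreasing; mirrored for f nonincreasing) and 0 otherwise. Then for every ε > 0, P( max_{0 ≤ k ≤ Nb} | Σ_{l=0}^{k-1} (η_N(l/N) − E η_N(l/N)) | ≥ ε ) = O(N^{-3/2}) as N → ∞; in particular this probability tends to 0. -/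
open MeasureTheory ProbabilityTheory

/-- Integral of `g ∘ Y` for a discrete random variable `Y` with atoms `v m` and weights `w m`. -/
theorem discrete_integral {Ω : Type*} [MeasurableSpace Ω] (μ : Measure Ω) [IsProbabilityMeasure μ]
    (Y : Ω → ℝ) (hY : Measurable Y) (v : ℕ → ℝ) (hv : Function.Injective v)
    (w : ℕ → ℝ) (hw0 : ∀ m, 0 ≤ w m)
    (hw : ∀ m, μ (Y ⁻¹' {v m}) = ENNReal.ofReal (w m))
    (hwsum : Summable w) (hw1 : ∑' m, w m = 1)
    (g : ℝ → ℝ) (hg : Measurable g) (hgsum : Summable fun m => |g (v m)| * w m) :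
    Integrable (fun ω => g (Y ω)) μ ∧ ∫ ω, g (Y ω) ∂μ = ∑' m, g (v m) * w m := by
  set A : ℕ → Set Ω := fun m => Y ⁻¹' {v m} with hA_def
  have hA : ∀ m, MeasurableSet (A m) := fun m => hY (measurableSet_singleton _)
  have hdisj : Pairwise (Function.onFun Disjoint A) := by
    intro m n hmn
    refine Set.disjoint_left.2 fun ω h1 h2 => hmn (hv ?_)
    have h1' : Y ω = v m := h1
    have h2' : Y ω = v n := h2
    rw [← h1', h2']
  set T : Set Ω := ⋃ m, A m with hT_def
  have hT : MeasurableSet T := MeasurableSet.iUnion hA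
  have hμT : μ T = 1 := by
    rw [hT_def, measure_iUnion hdisj hA]
    simp_rw [hA_def, hw]
    rw [← ENNReal.ofReal_tsum_of_nonneg hw0 hwsum, hw1, ENNReal.ofReal_one]
  have hTc : μ Tᶜ = 0 := by
    rw [measure_compl hT (measure_ne_top μ T), hμT, measure_univ, tsub_self]
  have hconst : ∀ m, ∀ ω ∈ A m, g (Y ω) = g (v m) := by
    intro m ω h
    have : Y ω = v m := h
    rw [this]
  -- set integrals over atoms
  have hset : ∀ m, ∫ ω in A m, g (Y ω) ∂μ = g (v m) * w m := by
    intro m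
    rw [setIntegral_congr_fun (hA m) (hconst m), setIntegral_const,
      measureReal_def, hw m, ENNReal.toReal_ofReal (hw0 m), smul_eq_mul, mul_comm]
  have hlin : ∫⁻ ω, ‖g (Y ω)‖₊ ∂μ = ∑' m, ENNReal.ofReal (|g (v m)| * w m) := by
    rw [← lintegral_add_compl (fun ω => (‖g (Y ω)‖₊ : ENNReal)) hT,
      setLIntegral_measure_zero _ _ hTc, add_zero, hT_def, lintegral_iUnion hA hdisj]
    congr 1
    funext m
    have : ∫⁻ ω in A m, (‖g (Y ω)‖₊ : ENNReal) ∂μ = ∫⁻ _ in A m, (‖g (v m)‖₊ : ENNReal) ∂μ := by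
      refine setLIntegral_congr_fun (hA m) (fun ω h => ?_)
      rw [hconst m ω h]
    rw [this, setLIntegral_const, hw m, ← enorm_eq_nnnorm, Real.enorm_eq_ofReal_abs,
      ← ENNReal.ofReal_mul (abs_nonneg _)]
  have hint : Integrable (fun ω => g (Y ω)) μ := by
    refine ⟨(hg.comp hY).aestronglyMeasurable, ?_⟩
    rw [hasFiniteIntegral_def, show ∫⁻ a, ‖g (Y a)‖ₑ ∂μ = ∫⁻ ω, ‖g (Y ω)‖₊ ∂μ from rfl, hlin,
      ← ENNReal.ofReal_tsum_of_nonneg (fun m => mul_nonneg (abs_nonneg _) (hw0 m)) hgsum]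
    exact ENNReal.ofReal_lt_top
  refine ⟨hint, ?_⟩
  rw [← integral_add_compl hT hint, setIntegral_measure_zero _ hTc, add_zero, hT_def,
    integral_iUnion hA hdisj hint.integrableOn]
  exact tsum_congr hset


noncomputable def geomS (M : ℝ) : ℝ := ∑' k : ℕ, (k : ℝ) * (M / (1 + M)) ^ k

noncomputable def geomD (M : ℝ) : ℝ :=
  ∑' m : ℕ, ((m : ℝ) + geomS M + 1) ^ 6 * (M / (1 + M)) ^ m

theorem geom_facts {M : ℝ} (hM : 0 ≤ M) :
    Summable (fun m : ℕ => ((m : ℝ) + geomS M + 1) ^ 6 * (M / (1 + M)) ^ m) ∧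
    0 ≤ geomS M := by
  have h1M : (0:ℝ) < 1 + M := by linarith
  have hr0 : 0 ≤ M / (1 + M) := by positivity
  have hr1 : M / (1 + M) < 1 := by rw [div_lt_one h1M]; linarith
  have hnorm : ‖M / (1 + M)‖ < 1 := by rwa [Real.norm_eq_abs, abs_of_nonneg hr0]
  constructor
  · have hexp : (fun m : ℕ => ((m : ℝ) + geomS M + 1) ^ 6 * (M / (1 + M)) ^ m) =
        fun m : ℕ => ∑ i ∈ Finset.range 7,
          ((m : ℝ) ^ i * (M / (1 + M)) ^ m) * ((geomS M + 1) ^ (6 - i) * (Nat.choose 6 i : ℝ)) := by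
      funext m
      rw [show ((m : ℝ) + geomS M + 1) = (m : ℝ) + (geomS M + 1) by ring, add_pow,
        Finset.sum_mul]
      refine Finset.sum_congr rfl fun i _ => by ring
    rw [hexp]
    exact summable_sum fun i _ =>
      ((summable_pow_mul_geometric_of_norm_lt_one i hnorm).mul_right _)
  · exact tsum_nonneg fun k => by positivity

/-- Moment bounds for a geometric-type random variable. -/
theorem site_moments {Ω : Type*} [MeasurableSpace Ω] (μ : Measure Ω) [IsProbabilityMeasure μ]
    (Y : Ω → ℝ) (hY : Measurable Y) (N : ℕ) (hN : 1 ≤ N) {p M : ℝ} (hp : 0 ≤ p) (hpM : p ≤ M)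
    (hl : ∀ m : ℕ, μ (Y ⁻¹' {(m : ℝ) / N}) =
      ENNReal.ofReal (p ^ m * (1 + p) ^ (-(m : ℤ) - 1))) :
    Integrable Y μ ∧ MemLp (fun ω => Y ω - ∫ ω', Y ω' ∂μ) 6 μ ∧
      ∀ j : ℕ, 2 ≤ j → j ≤ 6 →
        |∫ ω, (Y ω - ∫ ω', Y ω' ∂μ) ^ j ∂μ| ≤ geomD M / (N : ℝ) ^ j := by
  have hM : 0 ≤ M := hp.trans hpM
  have hN0 : (0:ℝ) < N := by exact_mod_cast hN
  have hp1 : (0:ℝ) < 1 + p := by linarith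
  have h1M : (0:ℝ) < 1 + M := by linarith
  set r : ℝ := p / (1 + p) with hr_def
  set r₀ : ℝ := M / (1 + M) with hr₀_def
  have hr0 : 0 ≤ r := by positivity
  have hr1 : r < 1 := by rw [hr_def, div_lt_one hp1]; linarith
  have hr₀0 : 0 ≤ r₀ := by positivity
  have hr₀1 : r₀ < 1 := by rw [hr₀_def, div_lt_one h1M]; linarith
  have hrr : r ≤ r₀ := by
    rw [hr_def, hr₀_def, div_le_div_iff₀ hp1 h1M]; nlinarith
  set w : ℕ → ℝ := fun m => p ^ m * (1 + p) ^ (-(m : ℤ) - 1) with hw_def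
  have hw_eq : ∀ m, w m = r ^ m * (1 + p)⁻¹ := by
    intro m
    have hz : (-(m : ℤ) - 1) = -((m + 1 : ℕ) : ℤ) := by push_cast; ring
    rw [hw_def]
    simp only
    rw [hz, zpow_neg, zpow_natCast, hr_def, div_pow]
    rw [pow_succ]
    field_simp
  have hw0 : ∀ m, 0 ≤ w m := fun m => by rw [hw_eq]; positivity
  have hwle : ∀ m, w m ≤ r₀ ^ m := by
    intro m
    rw [hw_eq]
    calc r ^ m * (1 + p)⁻¹ ≤ r ^ m * 1 := by
          apply mul_le_mul_of_nonneg_left _ (by positivity)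
          rw [inv_le_one_iff₀]; right; linarith
      _ = r ^ m := mul_one _
      _ ≤ r₀ ^ m := pow_le_pow_left₀ hr0 hrr m
  have hwsum : Summable w := by
    have : Summable fun m : ℕ => r ^ m * (1 + p)⁻¹ :=
      (summable_geometric_of_lt_one hr0 hr1).mul_right _
    exact this.congr fun m => (hw_eq m).symm
  have hw1 : ∑' m, w m = 1 := by
    calc ∑' m, w m = ∑' m : ℕ, r ^ m * (1 + p)⁻¹ := tsum_congr hw_eq
      _ = (1 - r)⁻¹ * (1 + p)⁻¹ := by rw [tsum_mul_right, tsum_geometric_of_lt_one hr0 hr1]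
      _ = 1 := by
          rw [hr_def]
          have : 1 - p / (1 + p) = (1 + p)⁻¹ := by field_simp; ring
          rw [this, inv_inv]
          field_simp
  set S : ℝ := geomS M with hS_def
  obtain ⟨hBsum, hS0⟩ := geom_facts hM
  set B : ℕ → ℝ := fun m => ((m : ℝ) + S + 1) ^ 6 * r₀ ^ m with hB_def
  have hB0 : ∀ m, 0 ≤ B m := fun m => by
    have : (0:ℝ) ≤ (m : ℝ) + S + 1 := by positivity
    rw [hB_def]; positivity
  have hDB : geomD M = ∑' m, B m := rfl
  have hD0 : 0 ≤ geomD M := by rw [hDB]; exact tsum_nonneg hB0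
  have hbase1 : ∀ m : ℕ, (1:ℝ) ≤ (m : ℝ) + S + 1 := fun m => by
    have : (0:ℝ) ≤ (m:ℝ) := Nat.cast_nonneg m; linarith
  have hv : Function.Injective (fun m : ℕ => (m : ℝ) / N) := by
    intro a b hab
    simp only [div_eq_div_iff hN0.ne' hN0.ne'] at hab
    exact_mod_cast mul_right_cancel₀ hN0.ne' hab
  -- mean computation
  have hid_bound : ∀ m : ℕ, |(fun t : ℝ => t) ((m : ℝ) / N)| * w m ≤ B m := by
    intro m
    simp only
    rw [abs_of_nonneg (by positivity : (0:ℝ) ≤ (m : ℝ) / N)]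
    calc (m : ℝ) / N * w m ≤ ((m : ℝ) + S + 1) * r₀ ^ m := by
          apply mul_le_mul _ (hwle m) (hw0 m) (by positivity)
          calc (m : ℝ) / N ≤ (m : ℝ) / 1 := by
                apply div_le_div_of_nonneg_left (Nat.cast_nonneg m) one_pos
                exact_mod_cast hN
            _ = (m : ℝ) := div_one _
            _ ≤ (m : ℝ) + S + 1 := by linarith
      _ ≤ B m := by
          rw [hB_def]
          apply mul_le_mul_of_nonneg_right _ (by positivity)
          calc ((m:ℝ) + S + 1) = ((m:ℝ) + S + 1)^1 := (pow_one _).symm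
            _ ≤ ((m:ℝ) + S + 1)^6 := pow_le_pow_right₀ (hbase1 m) (by norm_num)
  have hidsum : Summable fun m : ℕ => |(fun t : ℝ => t) ((m : ℝ) / N)| * w m :=
    Summable.of_nonneg_of_le (fun m => mul_nonneg (abs_nonneg _) (hw0 m)) hid_bound hBsum
  obtain ⟨hYint, hYeq⟩ := discrete_integral μ Y hY _ hv w hw0 hl hwsum hw1
    (fun t => t) measurable_id hidsum
  set c : ℝ := ∫ ω', Y ω' ∂μ with hc_def
  have hc_eq : c = ∑' m : ℕ, ((m : ℝ) / N) * w m := hYeq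
  have hgsum' : Summable fun m : ℕ => ((m : ℝ) / N) * w m :=
    hidsum.congr fun m => by
      simp only; rw [abs_of_nonneg (by positivity : (0:ℝ) ≤ (m : ℝ) / N)]
  have hc0 : 0 ≤ c := by
    rw [hc_eq]
    exact tsum_nonneg fun m => mul_nonneg (by positivity) (hw0 m)
  have hSsum : Summable fun k : ℕ => (k : ℝ) * r₀ ^ k := by
    have := summable_pow_mul_geometric_of_norm_lt_one (R := ℝ) 1
      (r := r₀) (by rwa [Real.norm_eq_abs, abs_of_nonneg hr₀0])
    exact this.congr fun k => by rw [pow_one]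
  have hcle : c ≤ S / N := by
    rw [hc_eq]
    have hterm : ∀ m : ℕ, ((m : ℝ) / N) * w m ≤ ((m : ℝ) * r₀ ^ m) / N := by
      intro m
      calc ((m : ℝ) / N) * w m ≤ ((m : ℝ) / N) * r₀ ^ m :=
            mul_le_mul_of_nonneg_left (hwle m) (by positivity)
        _ = ((m : ℝ) * r₀ ^ m) / N := by ring
    calc ∑' m : ℕ, ((m : ℝ) / N) * w m ≤ ∑' m : ℕ, ((m : ℝ) * r₀ ^ m) / N :=
          Summable.tsum_le_tsum hterm hgsum' (hSsum.div_const N)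
      _ = S / N := by rw [tsum_div_const, hS_def, geomS, ← hr₀_def]
  -- bounds for the centred moments
  have hkey : ∀ j : ℕ, j ≤ 6 → ∀ m : ℕ,
      |((m : ℝ) / N - c) ^ j| * w m ≤ B m / (N : ℝ) ^ j := by
    intro j hj m
    have hSN0 : (0:ℝ) ≤ S / N := by positivity
    have hmN0 : (0:ℝ) ≤ (m : ℝ) / N := by positivity
    have hadd : ((m : ℝ) + S) / N = (m : ℝ) / N + S / N := add_div _ _ _
    have habs : |(m : ℝ) / N - c| ≤ ((m : ℝ) + S) / N := by
      rw [abs_le]; constructor <;> [linarith; linarith]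
    have hnum : ((m : ℝ) + S) ^ j ≤ ((m : ℝ) + S + 1) ^ 6 :=
      le_trans (pow_le_pow_left₀ (by positivity) (by linarith) j)
        (pow_le_pow_right₀ (hbase1 m) hj)
    calc |((m : ℝ) / N - c) ^ j| * w m = |(m : ℝ) / N - c| ^ j * w m := by rw [abs_pow]
      _ ≤ (((m : ℝ) + S) / N) ^ j * r₀ ^ m :=
          mul_le_mul (pow_le_pow_left₀ (abs_nonneg _) habs j) (hwle m) (hw0 m) (by positivity)
      _ = ((m : ℝ) + S) ^ j / (N : ℝ) ^ j * r₀ ^ m := by rw [div_pow]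
      _ ≤ ((m : ℝ) + S + 1) ^ 6 / (N : ℝ) ^ j * r₀ ^ m := by
          apply mul_le_mul_of_nonneg_right _ (by positivity)
          exact (div_le_div_iff_of_pos_right (by positivity)).2 hnum
      _ = B m / (N : ℝ) ^ j := by rw [hB_def]; ring
  have hmomj : ∀ j : ℕ, j ≤ 6 → Integrable (fun ω => (Y ω - c) ^ j) μ ∧
      |∫ ω, (Y ω - c) ^ j ∂μ| ≤ geomD M / (N : ℝ) ^ j := by
    intro j hj
    have hmeasg : Measurable fun t : ℝ => (t - c) ^ j := (measurable_id.sub_const c).pow_const j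
    have hsumj : Summable fun m : ℕ => |(fun t : ℝ => (t - c) ^ j) ((m : ℝ) / N)| * w m :=
      Summable.of_nonneg_of_le (fun m => mul_nonneg (abs_nonneg _) (hw0 m))
        (fun m => hkey j hj m) (hBsum.div_const _)
    obtain ⟨hint, heq⟩ := discrete_integral μ Y hY _ hv w hw0 hl hwsum hw1 _ hmeasg hsumj
    refine ⟨hint, ?_⟩
    rw [heq]
    have hsumabs : Summable fun m : ℕ => ‖((m : ℝ) / N - c) ^ j * w m‖ :=
      hsumj.congr fun m => by
        simp only [Real.norm_eq_abs, abs_mul, abs_of_nonneg (hw0 m)]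
    calc |∑' m : ℕ, ((m : ℝ) / N - c) ^ j * w m|
        ≤ ∑' m : ℕ, |((m : ℝ) / N - c) ^ j * w m| := by
          have := norm_tsum_le_tsum_norm hsumabs
          simp only [Real.norm_eq_abs] at this
          exact this
      _ ≤ ∑' m : ℕ, B m / (N : ℝ) ^ j :=
          Summable.tsum_le_tsum (fun m => by
              rw [abs_mul, abs_of_nonneg (hw0 m)]; exact hkey j hj m)
            (hsumabs.congr fun m => (Real.norm_eq_abs _)) (hBsum.div_const _)
      _ = geomD M / (N : ℝ) ^ j := by rw [tsum_div_const, hDB]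
  have hX6 : Integrable (fun ω => (Y ω - c) ^ 6) μ := (hmomj 6 le_rfl).1
  refine ⟨hYint, ?_, fun j _ h6 => (hmomj j h6).2⟩
  refine ⟨(hY.sub_const c).aestronglyMeasurable, ?_⟩
  rw [eLpNorm_eq_lintegral_rpow_enorm_toReal (by norm_num) (by norm_num)]
  refine ENNReal.rpow_lt_top_of_nonneg (by positivity) ?_
  have hcongr : ∫⁻ ω, ‖Y ω - c‖ₑ ^ (6 : ENNReal).toReal ∂μ
      = ∫⁻ ω, (‖(Y ω - c) ^ 6‖₊ : ENNReal) ∂μ := by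
    refine lintegral_congr fun ω => ?_
    rw [enorm_eq_nnnorm, nnnorm_pow, ENNReal.coe_pow, ENNReal.toReal_ofNat, ← ENNReal.rpow_natCast]
    norm_num
  rw [hcongr]
  exact hX6.2.ne
theorem memℒp_pow_integrable {Ω : Type*} [MeasurableSpace Ω] {μ : Measure Ω}
    [IsProbabilityMeasure μ] {g : Ω → ℝ} (hg : MemLp g 6 μ) {i : ℕ} (hi : i ≤ 6) :
    Integrable (fun ω => g ω ^ i) μ := by
  rcases Nat.eq_zero_or_pos i with h0 | hpos
  · subst h0; simpa using integrable_const (1 : ℝ)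
  · have hle : ((i : ℕ) : ENNReal) ≤ 6 := by exact_mod_cast hi
    have h1 : MemLp g (i : ENNReal) μ := hg.mono_exponent hle
    have h2 : Integrable (fun ω => ‖g ω‖ ^ ((i : ENNReal)).toReal) μ :=
      h1.integrable_norm_rpow (by exact_mod_cast hpos.ne') (by simp)
    have heq : (fun ω => ‖g ω‖ ^ ((i : ENNReal)).toReal) = fun ω => |g ω| ^ i := by
      funext ω
      rw [ENNReal.toReal_natCast, Real.rpow_natCast, Real.norm_eq_abs]
    rw [heq] at h2
    exact h2.mono' ((hg.aestronglyMeasurable.aemeasurable.pow_const i).aestronglyMeasurable)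
      (Filter.Eventually.of_forall fun ω => by rw [Real.norm_eq_abs, abs_pow])

theorem integral_add_pow_indep {Ω : Type*} [MeasurableSpace Ω] {μ : Measure Ω}
    [IsProbabilityMeasure μ] {S X : Ω → ℝ} (hS6 : MemLp S 6 μ) (hX6 : MemLp X 6 μ)
    (hSX : IndepFun S X μ) {j : ℕ} (hj : j ≤ 6) :
    ∫ ω, (S ω + X ω) ^ j ∂μ =
      ∑ i ∈ Finset.range (j + 1),
        (j.choose i : ℝ) * ((∫ ω, S ω ^ i ∂μ) * ∫ ω, X ω ^ (j - i) ∂μ) := by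
  have hintS : ∀ i, i ≤ 6 → Integrable (fun ω => S ω ^ i) μ :=
    fun i hi => memℒp_pow_integrable hS6 hi
  have hintX : ∀ i, i ≤ 6 → Integrable (fun ω => X ω ^ i) μ :=
    fun i hi => memℒp_pow_integrable hX6 hi
  have hindep : ∀ i i' : ℕ, IndepFun (fun ω => S ω ^ i) (fun ω => X ω ^ i') μ :=
    fun i i' => hSX.comp (measurable_id.pow_const i) (measurable_id.pow_const i')
  have hintterm : ∀ i ∈ Finset.range (j + 1),
      Integrable (fun ω => S ω ^ i * X ω ^ (j - i) * (j.choose i : ℝ)) μ := by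
    intro i hi
    have hi6 : i ≤ 6 := le_trans (Nat.lt_succ_iff.1 (Finset.mem_range.1 hi)) hj
    have h1 : Integrable (fun ω => S ω ^ i * X ω ^ (j - i)) μ :=
      (hindep i (j - i)).integrable_mul (hintS i hi6) (hintX (j - i) (le_trans (Nat.sub_le _ _) hj))
    exact h1.mul_const _
  have hpt : (fun ω => (S ω + X ω) ^ j) =
      fun ω => ∑ i ∈ Finset.range (j + 1), S ω ^ i * X ω ^ (j - i) * (j.choose i : ℝ) :=
    funext fun ω => add_pow _ _ _
  calc ∫ ω, (S ω + X ω) ^ j ∂μ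
      = ∫ ω, ∑ i ∈ Finset.range (j + 1), S ω ^ i * X ω ^ (j - i) * (j.choose i : ℝ) ∂μ := by
        rw [← hpt]
    _ = ∑ i ∈ Finset.range (j + 1), ∫ ω, S ω ^ i * X ω ^ (j - i) * (j.choose i : ℝ) ∂μ :=
        integral_finset_sum _ hintterm
    _ = ∑ i ∈ Finset.range (j + 1), (j.choose i : ℝ) * ((∫ ω, S ω ^ i ∂μ) * ∫ ω, X ω ^ (j - i) ∂μ) := by
        refine Finset.sum_congr rfl fun i hi => ?_
        have hi6 : i ≤ 6 := le_trans (Nat.lt_succ_iff.1 (Finset.mem_range.1 hi)) hj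
        have hmul : ∫ ω, S ω ^ i * X ω ^ (j - i) ∂μ =
            (∫ ω, S ω ^ i ∂μ) * ∫ ω, X ω ^ (j - i) ∂μ := by
          have := (hindep i (j - i)).integral_fun_mul_eq_mul_integral
            (hintS i hi6).aestronglyMeasurable
            (hintX (j - i) (le_trans (Nat.sub_le _ _) hj)).aestronglyMeasurable
          exact this
        rw [integral_mul_const, hmul]
        ring
set_option maxHeartbeats 1000000 in
theorem moment_induction {Ω : Type*} [MeasurableSpace Ω] (μ : Measure Ω) [IsProbabilityMeasure μ]
    (X : ℕ → Ω → ℝ) (hXm : ∀ l, Measurable (X l))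
    (hind : iIndepFun X μ)
    (V n : ℝ) (hV : 1 ≤ V) (hn : 0 < n) (K : ℕ)
    (hL6 : ∀ l < K, MemLp (X l) 6 μ)
    (h0 : ∀ l < K, ∫ ω, X l ω ∂μ = 0)
    (hmom : ∀ l < K, ∀ j : ℕ, 2 ≤ j → j ≤ 6 → |∫ ω, (X l ω) ^ j ∂μ| ≤ V / n ^ j) :
    ∀ k ≤ K, MemLp (fun ω => ∑ l ∈ Finset.range k, X l ω) 6 μ ∧
      (∫ ω, (∑ l ∈ Finset.range k, X l ω) ∂μ) = 0 ∧
      (∫ ω, (∑ l ∈ Finset.range k, X l ω) ^ 2 ∂μ) ≤ V * k / n ^ 2 ∧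
      |∫ ω, (∑ l ∈ Finset.range k, X l ω) ^ 3 ∂μ| ≤ V * k / n ^ 3 ∧
      (∫ ω, (∑ l ∈ Finset.range k, X l ω) ^ 4 ∂μ) ≤ 4 * V ^ 2 * k ^ 2 / n ^ 4 ∧
      |∫ ω, (∑ l ∈ Finset.range k, X l ω) ^ 5 ∂μ| ≤ 20 * V ^ 2 * k ^ 2 / n ^ 5 ∧
      (∫ ω, (∑ l ∈ Finset.range k, X l ω) ^ 6 ∂μ) ≤ 60 * V ^ 3 * k ^ 3 / n ^ 6 := by
  have hV0 : (0:ℝ) < V := lt_of_lt_of_le one_pos hV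
  intro k
  induction k with
  | zero =>
    intro _
    simp only [Finset.range_zero, Finset.sum_empty]
    refine ⟨memLp_const 0, by simp, ?_, ?_, ?_, ?_, ?_⟩ <;> simp
  | succ k ih =>
    intro hk1
    have hkK : k < K := Nat.lt_of_succ_le hk1
    obtain ⟨hS6, hS1, hS2, hS3, hS4, hS5, hSS6⟩ := ih (le_of_lt hkK)
    set Sf : Ω → ℝ := fun ω => ∑ l ∈ Finset.range k, X l ω with hSf
    have hk0 : (0:ℝ) ≤ (k : ℝ) := Nat.cast_nonneg k
    have hXk6 : MemLp (X k) 6 μ := hL6 k hkK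
    have hXk0 : ∫ ω, X k ω ∂μ = 0 := h0 k hkK
    have hXmom := hmom k hkK
    have hindSX : IndepFun Sf (X k) μ := by
      have h := hind.indepFun_sum_range_succ hXm k
      have he : (∑ l ∈ Finset.range k, X l) = Sf := by
        funext ω; simp [hSf]
      rwa [he] at h
    have hexp : ∀ j : ℕ, j ≤ 6 → ∫ ω, (∑ l ∈ Finset.range (k + 1), X l ω) ^ j ∂μ =
        ∑ i ∈ Finset.range (j + 1),
          (j.choose i : ℝ) * ((∫ ω, Sf ω ^ i ∂μ) * ∫ ω, X k ω ^ (j - i) ∂μ) := by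
      intro j hj
      have hpt : ∀ ω, (∑ l ∈ Finset.range (k + 1), X l ω) ^ j = (Sf ω + X k ω) ^ j := by
        intro ω; rw [Finset.sum_range_succ]
      simp only [hpt]
      exact integral_add_pow_indep hS6 hXk6 hindSX hj
    -- basic integrals
    have hS1i : ∫ ω, Sf ω ^ 1 ∂μ = 0 := by simpa [pow_one] using hS1
    have hX1i : ∫ ω, X k ω ^ 1 ∂μ = 0 := by simpa [pow_one] using hXk0
    -- nonnegativity of even moments
    have hS2nn : 0 ≤ ∫ ω, Sf ω ^ 2 ∂μ := integral_nonneg fun ω => by positivity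
    have hS4nn : 0 ≤ ∫ ω, Sf ω ^ 4 ∂μ := integral_nonneg fun ω => by positivity
    have hX2nn : 0 ≤ ∫ ω, X k ω ^ 2 ∂μ := integral_nonneg fun ω => by positivity
    have hX4nn : 0 ≤ ∫ ω, X k ω ^ 4 ∂μ := integral_nonneg fun ω => by positivity
    have hX2 : ∫ ω, X k ω ^ 2 ∂μ ≤ V / n ^ 2 := le_of_abs_le (hXmom 2 (by norm_num) (by norm_num))
    have hX3 : |∫ ω, X k ω ^ 3 ∂μ| ≤ V / n ^ 3 := hXmom 3 (by norm_num) (by norm_num)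
    have hX4 : ∫ ω, X k ω ^ 4 ∂μ ≤ V / n ^ 4 := le_of_abs_le (hXmom 4 (by norm_num) (by norm_num))
    have hX5 : |∫ ω, X k ω ^ 5 ∂μ| ≤ V / n ^ 5 := hXmom 5 (by norm_num) (by norm_num)
    have hX6 : ∫ ω, X k ω ^ 6 ∂μ ≤ V / n ^ 6 := le_of_abs_le (hXmom 6 (by norm_num) (by norm_num))
    -- identities
    have hid1 : ∫ ω, (∑ l ∈ Finset.range (k + 1), X l ω) ∂μ = 0 := by
      have := hexp 1 (by norm_num)
      simp only [pow_one] at this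
      rw [this]
      simp [Finset.sum_range_succ, hS1i, hX1i, hS1, hXk0]
    have hid2 : ∫ ω, (∑ l ∈ Finset.range (k + 1), X l ω) ^ 2 ∂μ =
        (∫ ω, X k ω ^ 2 ∂μ) + ∫ ω, Sf ω ^ 2 ∂μ := by
      rw [hexp 2 (by norm_num)]
      norm_num [Finset.sum_range_succ, hS1i, hX1i, hS1, hXk0, Nat.choose]
    have hid3 : ∫ ω, (∑ l ∈ Finset.range (k + 1), X l ω) ^ 3 ∂μ =
        (∫ ω, X k ω ^ 3 ∂μ) + ∫ ω, Sf ω ^ 3 ∂μ := by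
      rw [hexp 3 (by norm_num)]
      norm_num [Finset.sum_range_succ, hS1i, hX1i, hS1, hXk0, Nat.choose]
    have hid4 : ∫ ω, (∑ l ∈ Finset.range (k + 1), X l ω) ^ 4 ∂μ =
        (∫ ω, X k ω ^ 4 ∂μ) + 6 * ((∫ ω, Sf ω ^ 2 ∂μ) * ∫ ω, X k ω ^ 2 ∂μ)
          + ∫ ω, Sf ω ^ 4 ∂μ := by
      rw [hexp 4 (by norm_num)]
      norm_num [Finset.sum_range_succ, hS1i, hX1i, hS1, hXk0, Nat.choose]
    have hid5 : ∫ ω, (∑ l ∈ Finset.range (k + 1), X l ω) ^ 5 ∂μ =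
        (∫ ω, X k ω ^ 5 ∂μ) + 10 * ((∫ ω, Sf ω ^ 2 ∂μ) * ∫ ω, X k ω ^ 3 ∂μ)
          + 10 * ((∫ ω, Sf ω ^ 3 ∂μ) * ∫ ω, X k ω ^ 2 ∂μ) + ∫ ω, Sf ω ^ 5 ∂μ := by
      rw [hexp 5 (by norm_num)]
      norm_num [Finset.sum_range_succ, hS1i, hX1i, hS1, hXk0, Nat.choose]
    have hid6 : ∫ ω, (∑ l ∈ Finset.range (k + 1), X l ω) ^ 6 ∂μ =
        (∫ ω, X k ω ^ 6 ∂μ) + 15 * ((∫ ω, Sf ω ^ 2 ∂μ) * ∫ ω, X k ω ^ 4 ∂μ)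
          + 20 * ((∫ ω, Sf ω ^ 3 ∂μ) * ∫ ω, X k ω ^ 3 ∂μ)
          + 15 * ((∫ ω, Sf ω ^ 4 ∂μ) * ∫ ω, X k ω ^ 2 ∂μ) + ∫ ω, Sf ω ^ 6 ∂μ := by
      rw [hexp 6 (by norm_num)]
      norm_num [Finset.sum_range_succ, hS1i, hX1i, hS1, hXk0, Nat.choose]
    refine ⟨?_, hid1, ?_, ?_, ?_, ?_, ?_⟩
    · simp only [Finset.sum_range_succ]
      exact hS6.add hXk6
    · -- second moment
      rw [hid2]
      calc (∫ ω, X k ω ^ 2 ∂μ) + ∫ ω, Sf ω ^ 2 ∂μ ≤ V / n ^ 2 + V * k / n ^ 2 :=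
            add_le_add hX2 hS2
        _ = (V + V * k) / n ^ 2 := by ring
        _ ≤ V * (k + 1 : ℕ) / n ^ 2 := by
            gcongr
            push_cast; nlinarith
    · -- third moment
      rw [hid3]
      calc |(∫ ω, X k ω ^ 3 ∂μ) + ∫ ω, Sf ω ^ 3 ∂μ|
          ≤ |∫ ω, X k ω ^ 3 ∂μ| + |∫ ω, Sf ω ^ 3 ∂μ| := abs_add_le _ _
        _ ≤ V / n ^ 3 + V * k / n ^ 3 := add_le_add hX3 hS3
        _ = (V + V * k) / n ^ 3 := by ring
        _ ≤ V * (k + 1 : ℕ) / n ^ 3 := by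
            gcongr
            push_cast; nlinarith
    · -- fourth moment
      rw [hid4]
      have hprod : (∫ ω, Sf ω ^ 2 ∂μ) * ∫ ω, X k ω ^ 2 ∂μ ≤ (V * k / n ^ 2) * (V / n ^ 2) :=
        mul_le_mul hS2 hX2 hX2nn (by positivity)
      calc (∫ ω, X k ω ^ 4 ∂μ) + 6 * ((∫ ω, Sf ω ^ 2 ∂μ) * ∫ ω, X k ω ^ 2 ∂μ)
            + ∫ ω, Sf ω ^ 4 ∂μ
          ≤ V / n ^ 4 + 6 * ((V * k / n ^ 2) * (V / n ^ 2)) + 4 * V ^ 2 * k ^ 2 / n ^ 4 := by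
            refine add_le_add (add_le_add hX4 ?_) hS4
            exact mul_le_mul_of_nonneg_left hprod (by norm_num)
        _ = (V + 6 * V ^ 2 * k + 4 * V ^ 2 * k ^ 2) / n ^ 4 := by ring
        _ ≤ 4 * V ^ 2 * (k + 1 : ℕ) ^ 2 / n ^ 4 := by
            gcongr
            push_cast
            nlinarith [mul_le_mul_of_nonneg_right hV hk0]
    · -- fifth moment
      rw [hid5]
      have habs2 : |∫ ω, Sf ω ^ 2 ∂μ| ≤ V * k / n ^ 2 := by
        rw [abs_of_nonneg hS2nn]; exact hS2
      have hp1 : |(∫ ω, Sf ω ^ 2 ∂μ) * ∫ ω, X k ω ^ 3 ∂μ| ≤ (V * k / n ^ 2) * (V / n ^ 3) := by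
        rw [abs_mul]
        exact mul_le_mul habs2 hX3 (abs_nonneg _) (by positivity)
      have hp2 : |(∫ ω, Sf ω ^ 3 ∂μ) * ∫ ω, X k ω ^ 2 ∂μ| ≤ (V * k / n ^ 3) * (V / n ^ 2) := by
        rw [abs_mul]
        refine mul_le_mul hS3 ?_ (abs_nonneg _) (by positivity)
        rw [abs_of_nonneg hX2nn]; exact hX2
      calc |(∫ ω, X k ω ^ 5 ∂μ) + 10 * ((∫ ω, Sf ω ^ 2 ∂μ) * ∫ ω, X k ω ^ 3 ∂μ)
            + 10 * ((∫ ω, Sf ω ^ 3 ∂μ) * ∫ ω, X k ω ^ 2 ∂μ) + ∫ ω, Sf ω ^ 5 ∂μ|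
          ≤ |∫ ω, X k ω ^ 5 ∂μ| + 10 * |(∫ ω, Sf ω ^ 2 ∂μ) * ∫ ω, X k ω ^ 3 ∂μ|
            + 10 * |(∫ ω, Sf ω ^ 3 ∂μ) * ∫ ω, X k ω ^ 2 ∂μ| + |∫ ω, Sf ω ^ 5 ∂μ| := by
            have h1 := abs_add_le ((∫ ω, X k ω ^ 5 ∂μ)
              + 10 * ((∫ ω, Sf ω ^ 2 ∂μ) * ∫ ω, X k ω ^ 3 ∂μ)
              + 10 * ((∫ ω, Sf ω ^ 3 ∂μ) * ∫ ω, X k ω ^ 2 ∂μ)) (∫ ω, Sf ω ^ 5 ∂μ)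
            have h2 := abs_add_le ((∫ ω, X k ω ^ 5 ∂μ)
              + 10 * ((∫ ω, Sf ω ^ 2 ∂μ) * ∫ ω, X k ω ^ 3 ∂μ))
              (10 * ((∫ ω, Sf ω ^ 3 ∂μ) * ∫ ω, X k ω ^ 2 ∂μ))
            have h3 := abs_add_le (∫ ω, X k ω ^ 5 ∂μ)
              (10 * ((∫ ω, Sf ω ^ 2 ∂μ) * ∫ ω, X k ω ^ 3 ∂μ))
            rw [abs_mul (10:ℝ), abs_of_nonneg (by norm_num : (0:ℝ) ≤ 10)] at h2 h3
            linarith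
        _ ≤ V / n ^ 5 + 10 * ((V * k / n ^ 2) * (V / n ^ 3))
            + 10 * ((V * k / n ^ 3) * (V / n ^ 2)) + 20 * V ^ 2 * k ^ 2 / n ^ 5 := by
            refine add_le_add (add_le_add (add_le_add hX5 ?_) ?_) hS5
            · exact mul_le_mul_of_nonneg_left hp1 (by norm_num)
            · exact mul_le_mul_of_nonneg_left hp2 (by norm_num)
        _ = (V + 20 * V ^ 2 * k + 20 * V ^ 2 * k ^ 2) / n ^ 5 := by ring
        _ ≤ 20 * V ^ 2 * (k + 1 : ℕ) ^ 2 / n ^ 5 := by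
            gcongr
            push_cast
            nlinarith [mul_le_mul_of_nonneg_right hV hk0]
    · -- sixth moment
      rw [hid6]
      have hp1 : (∫ ω, Sf ω ^ 2 ∂μ) * ∫ ω, X k ω ^ 4 ∂μ ≤ (V * k / n ^ 2) * (V / n ^ 4) :=
        mul_le_mul hS2 hX4 hX4nn (by positivity)
      have hp2 : (∫ ω, Sf ω ^ 3 ∂μ) * ∫ ω, X k ω ^ 3 ∂μ ≤ (V * k / n ^ 3) * (V / n ^ 3) := by
        calc (∫ ω, Sf ω ^ 3 ∂μ) * ∫ ω, X k ω ^ 3 ∂μ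
            ≤ |(∫ ω, Sf ω ^ 3 ∂μ) * ∫ ω, X k ω ^ 3 ∂μ| := le_abs_self _
          _ = |∫ ω, Sf ω ^ 3 ∂μ| * |∫ ω, X k ω ^ 3 ∂μ| := abs_mul _ _
          _ ≤ (V * k / n ^ 3) * (V / n ^ 3) :=
              mul_le_mul hS3 hX3 (abs_nonneg _) (by positivity)
      have hp3 : (∫ ω, Sf ω ^ 4 ∂μ) * ∫ ω, X k ω ^ 2 ∂μ ≤ (4 * V ^ 2 * k ^ 2 / n ^ 4) * (V / n ^ 2) :=
        mul_le_mul hS4 hX2 hX2nn (by positivity)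
      calc (∫ ω, X k ω ^ 6 ∂μ) + 15 * ((∫ ω, Sf ω ^ 2 ∂μ) * ∫ ω, X k ω ^ 4 ∂μ)
            + 20 * ((∫ ω, Sf ω ^ 3 ∂μ) * ∫ ω, X k ω ^ 3 ∂μ)
            + 15 * ((∫ ω, Sf ω ^ 4 ∂μ) * ∫ ω, X k ω ^ 2 ∂μ) + ∫ ω, Sf ω ^ 6 ∂μ
          ≤ V / n ^ 6 + 15 * ((V * k / n ^ 2) * (V / n ^ 4))
            + 20 * ((V * k / n ^ 3) * (V / n ^ 3))
            + 15 * ((4 * V ^ 2 * k ^ 2 / n ^ 4) * (V / n ^ 2)) + 60 * V ^ 3 * k ^ 3 / n ^ 6 := by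
            refine add_le_add (add_le_add (add_le_add (add_le_add hX6 ?_) ?_) ?_) hSS6
            · exact mul_le_mul_of_nonneg_left hp1 (by norm_num)
            · exact mul_le_mul_of_nonneg_left hp2 (by norm_num)
            · exact mul_le_mul_of_nonneg_left hp3 (by norm_num)
        _ = (V + 35 * V ^ 2 * k + 60 * V ^ 3 * k ^ 2 + 60 * V ^ 3 * k ^ 3) / n ^ 6 := by ring
        _ ≤ 60 * V ^ 3 * (k + 1 : ℕ) ^ 3 / n ^ 6 := by
            gcongr
            push_cast
            nlinarith [mul_le_mul_of_nonneg_right hV hk0, sq_nonneg (V * k), sq_nonneg V,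
              mul_le_mul_of_nonneg_right (mul_le_mul_of_nonneg_right hV hV0.le) hk0,
              mul_nonneg (mul_nonneg hV0.le hV0.le) hk0]
set_option maxHeartbeats 1000000

/-- for independent geometric increments `η_N(l/N)` with parameter
`|f'(l/N)|` (f monotone C² on `[0,b]`), the maximal deviation probability satisfies
`P(max_{k ≤ Nb} |Σ_{l<k} (η_N(l/N) − E η_N(l/N))| ≥ ε) = O(N^{-3/2})`. -/
theorem maximal_deviation_geometric_increments
    {Ω : Type*} [MeasurableSpace Ω] (μ : Measure Ω) [IsProbabilityMeasure μ]
    (b : ℝ) (hb : 0 < b) (f : ℝ → ℝ)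
    (hf : ContDiffOn ℝ 2 f (Set.Icc 0 b))
    (hmono : MonotoneOn f (Set.Icc 0 b))
    (η : ℕ → ℕ → Ω → ℝ)
    (hmeas : ∀ N l, Measurable (η N l))
    (hindep : ∀ N, iIndepFun (η N) μ)
    (hlaw : ∀ N : ℕ, 1 ≤ N → ∀ l : ℕ, (l : ℝ) / N ≤ b → ∀ m : ℕ,
      μ {ω | η N l ω = (m : ℝ) / N} =
        ENNReal.ofReal
          (|deriv f ((l : ℝ) / N)| ^ m * (1 + |deriv f ((l : ℝ) / N)|) ^ (-(m : ℤ) - 1))) :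
    ∀ ε > 0, ∃ C : ℝ, 0 < C ∧ ∀ N : ℕ, 1 ≤ N →
      μ {ω | ∃ k ≤ ⌊(N : ℝ) * b⌋₊,
          ε ≤ |∑ l ∈ Finset.range k, (η N l ω - ∫ ω', η N l ω' ∂μ)|}
        ≤ ENNReal.ofReal (C * (N : ℝ) ^ (-(3 : ℝ) / 2)) := by
  -- a uniform bound for |deriv f| on [0, b]
  obtain ⟨M, hM0, hMb⟩ : ∃ M : ℝ, 0 ≤ M ∧ ∀ x ∈ Set.Icc (0:ℝ) b, |deriv f x| ≤ M := by
    have hu : UniqueDiffOn ℝ (Set.Icc (0:ℝ) b) := uniqueDiffOn_Icc hb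
    have hcont : ContinuousOn (derivWithin f (Set.Icc 0 b)) (Set.Icc 0 b) :=
      ((hf.derivWithin hu (m := 1) (by norm_num)).continuousOn)
    obtain ⟨C, hC⟩ := (isCompact_Icc).exists_bound_of_continuousOn hcont
    refine ⟨max C 0, le_max_right _ _, fun x hx => ?_⟩
    by_cases hd : DifferentiableAt ℝ f x
    · rw [← hd.derivWithin (hu x hx)]
      exact le_trans (by simpa [Real.norm_eq_abs] using hC x hx) (le_max_left _ _)
    · rw [deriv_zero_of_not_differentiableAt hd, abs_zero]
      exact le_max_right _ _
  intro ε hε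
  set V : ℝ := max (geomD M) 1 with hV_def
  have hV1 : (1:ℝ) ≤ V := le_max_right _ _
  have hV0 : (0:ℝ) < V := lt_of_lt_of_le one_pos hV1
  refine ⟨60 * V ^ 3 * (b + 1) * b ^ 3 / ε ^ 6 + 1, by positivity, ?_⟩
  intro N hN
  have hN0 : (0:ℝ) < (N:ℝ) := by exact_mod_cast hN
  have hN1 : (1:ℝ) ≤ (N:ℝ) := by exact_mod_cast hN
  set K : ℕ := ⌊(N : ℝ) * b⌋₊ with hK_def
  set X : ℕ → Ω → ℝ := fun l ω => η N l ω - ∫ ω', η N l ω' ∂μ with hX_def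
  have hXm : ∀ l, Measurable (X l) := fun l => (hmeas N l).sub_const _
  have hindX : iIndepFun X μ :=
    (hindep N).comp (fun l => fun t : ℝ => t - ∫ ω', η N l ω' ∂μ)
      (fun l => measurable_id.sub_const _)
  have hlb : ∀ l, l < K → (l : ℝ) / N ≤ b := by
    intro l hl
    have h1 : (l:ℝ) + 1 ≤ (K:ℝ) := by exact_mod_cast Nat.succ_le_of_lt hl
    have h2 : (K:ℝ) ≤ (N:ℝ) * b := Nat.floor_le (by positivity)
    rw [div_le_iff₀ hN0, mul_comm]
    linarith
  -- per-site moment bounds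
  have hsite : ∀ l, l < K → Integrable (η N l) μ ∧ MemLp (X l) 6 μ ∧
      ∀ j : ℕ, 2 ≤ j → j ≤ 6 → |∫ ω, (X l ω) ^ j ∂μ| ≤ geomD M / (N : ℝ) ^ j := by
    intro l hl
    have hmem : (l : ℝ) / N ∈ Set.Icc (0:ℝ) b := ⟨by positivity, hlb l hl⟩
    have hl' : ∀ m : ℕ, μ (η N l ⁻¹' {(m : ℝ) / N}) =
        ENNReal.ofReal
          (|deriv f ((l : ℝ) / N)| ^ m * (1 + |deriv f ((l : ℝ) / N)|) ^ (-(m : ℤ) - 1)) :=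
      fun m => hlaw N hN l (hlb l hl) m
    exact site_moments μ (η N l) (hmeas N l) N hN (abs_nonneg _) (hMb _ hmem) hl'
  have hL6 : ∀ l < K, MemLp (X l) 6 μ := fun l hl => (hsite l hl).2.1
  have h0 : ∀ l < K, ∫ ω, X l ω ∂μ = 0 := by
    intro l hl
    rw [hX_def]
    simp only
    rw [integral_sub (hsite l hl).1 (integrable_const _), integral_const]
    simp
  have hmomX : ∀ l < K, ∀ j : ℕ, 2 ≤ j → j ≤ 6 → |∫ ω, (X l ω) ^ j ∂μ| ≤ V / (N:ℝ) ^ j := by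
    intro l hl j h2 h6
    refine le_trans ((hsite l hl).2.2 j h2 h6) ?_
    gcongr
    exact le_max_left _ _
  have hP := moment_induction μ X hXm hindX V (N:ℝ) hV1 hN0 K hL6 h0 hmomX
  -- Markov bound for each k ≤ K
  have hε6 : (0:ℝ) < ε ^ 6 := by positivity
  set Bd : ℝ := 60 * V ^ 3 * (K:ℝ) ^ 3 / ((N:ℝ) ^ 6 * ε ^ 6) with hBd_def
  have hmarkov : ∀ k, k ≤ K →
      μ {ω | ε ≤ |∑ l ∈ Finset.range k, X l ω|} ≤ ENNReal.ofReal Bd := by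
    intro k hk
    obtain ⟨hk6, -, -, -, -, -, hk6m⟩ := hP k hk
    have hGint : Integrable (fun ω => (∑ l ∈ Finset.range k, X l ω) ^ 6) μ :=
      memℒp_pow_integrable hk6 le_rfl
    have hsub : {ω | ε ≤ |∑ l ∈ Finset.range k, X l ω|} ⊆
        {ω | ε ^ 6 ≤ (∑ l ∈ Finset.range k, X l ω) ^ 6} := by
      intro ω h
      have h1 : ε ^ 6 ≤ |∑ l ∈ Finset.range k, X l ω| ^ 6 :=
        pow_le_pow_left₀ hε.le h 6
      have h2 : |∑ l ∈ Finset.range k, X l ω| ^ 6 = (∑ l ∈ Finset.range k, X l ω) ^ 6 := by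
        rw [← abs_pow, abs_of_nonneg (by positivity)]
      show ε ^ 6 ≤ (∑ l ∈ Finset.range k, X l ω) ^ 6
      rw [← h2]; exact h1
    have hmkv := mul_meas_ge_le_integral_of_nonneg
      (Filter.Eventually.of_forall (fun ω => by positivity :
        ∀ ω, 0 ≤ (fun ω => (∑ l ∈ Finset.range k, X l ω) ^ 6) ω)) hGint (ε ^ 6)
    have hI : ∫ ω, (∑ l ∈ Finset.range k, X l ω) ^ 6 ∂μ ≤ 60 * V ^ 3 * (K:ℝ) ^ 3 / (N:ℝ) ^ 6 := by
      refine le_trans hk6m ?_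
      gcongr
    have htr : (μ {ω | ε ^ 6 ≤ (∑ l ∈ Finset.range k, X l ω) ^ 6}).toReal ≤ Bd := by
      rw [hBd_def, ← div_div]
      rw [le_div_iff₀ hε6]
      calc (μ {ω | ε ^ 6 ≤ (∑ l ∈ Finset.range k, X l ω) ^ 6}).toReal * ε ^ 6
          = ε ^ 6 * (μ {ω | ε ^ 6 ≤ (∑ l ∈ Finset.range k, X l ω) ^ 6}).toReal := mul_comm _ _
        _ ≤ ∫ ω, (∑ l ∈ Finset.range k, X l ω) ^ 6 ∂μ := hmkv
        _ ≤ 60 * V ^ 3 * (K:ℝ) ^ 3 / (N:ℝ) ^ 6 := hI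
    calc μ {ω | ε ≤ |∑ l ∈ Finset.range k, X l ω|}
        ≤ μ {ω | ε ^ 6 ≤ (∑ l ∈ Finset.range k, X l ω) ^ 6} := measure_mono hsub
      _ = ENNReal.ofReal ((μ {ω | ε ^ 6 ≤ (∑ l ∈ Finset.range k, X l ω) ^ 6}).toReal) :=
          (ENNReal.ofReal_toReal (measure_ne_top μ _)).symm
      _ ≤ ENNReal.ofReal Bd := ENNReal.ofReal_le_ofReal htr
  -- union bound
  have hunion : {ω | ∃ k ≤ K, ε ≤ |∑ l ∈ Finset.range k, X l ω|} ⊆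
      ⋃ k ∈ Finset.range (K + 1), {ω | ε ≤ |∑ l ∈ Finset.range k, X l ω|} := by
    rintro ω ⟨k, hk, h⟩
    exact Set.mem_biUnion (Finset.mem_range.2 (Nat.lt_succ_of_le hk)) h
  have hsum : μ {ω | ∃ k ≤ K, ε ≤ |∑ l ∈ Finset.range k, X l ω|} ≤
      ENNReal.ofReal (((K:ℝ) + 1) * Bd) := by
    calc μ {ω | ∃ k ≤ K, ε ≤ |∑ l ∈ Finset.range k, X l ω|}
        ≤ μ (⋃ k ∈ Finset.range (K + 1), {ω | ε ≤ |∑ l ∈ Finset.range k, X l ω|}) :=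
          measure_mono hunion
      _ ≤ ∑ k ∈ Finset.range (K + 1), μ {ω | ε ≤ |∑ l ∈ Finset.range k, X l ω|} :=
          measure_biUnion_finset_le _ _
      _ ≤ ∑ k ∈ Finset.range (K + 1), ENNReal.ofReal Bd :=
          Finset.sum_le_sum fun k hk => hmarkov k (Nat.lt_succ_iff.1 (Finset.mem_range.1 hk))
      _ = (K + 1) • ENNReal.ofReal Bd := by rw [Finset.sum_const, Finset.card_range]
      _ = ((K + 1 : ℕ) : ENNReal) * ENNReal.ofReal Bd := by rw [nsmul_eq_mul]
      _ = ENNReal.ofReal ((K + 1 : ℕ) : ℝ) * ENNReal.ofReal Bd := by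
          rw [ENNReal.ofReal_natCast]
      _ = ENNReal.ofReal (((K + 1 : ℕ) : ℝ) * Bd) := by
          rw [← ENNReal.ofReal_mul (by positivity)]
      _ = ENNReal.ofReal (((K:ℝ) + 1) * Bd) := by push_cast; ring_nf
  refine le_trans hsum (ENNReal.ofReal_le_ofReal ?_)
  -- final real-number estimate
  have hK : (K:ℝ) ≤ (N:ℝ) * b := Nat.floor_le (by positivity)
  have hK0 : (0:ℝ) ≤ (K:ℝ) := Nat.cast_nonneg K
  have h1 : (K:ℝ) + 1 ≤ (N:ℝ) * (b + 1) := by nlinarith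
  have h2 : (K:ℝ) ^ 3 ≤ ((N:ℝ) * b) ^ 3 := pow_le_pow_left₀ hK0 hK 3
  have hEq : ((N:ℝ) * (b + 1)) * (60 * V ^ 3 * ((N:ℝ) * b) ^ 3 / ((N:ℝ) ^ 6 * ε ^ 6)) =
      (60 * V ^ 3 * (b + 1) * b ^ 3 / ε ^ 6) * (((N:ℝ) ^ 2)⁻¹) := by
    field_simp
  have hrp : (((N:ℝ) ^ 2)⁻¹) = (N:ℝ) ^ (-(2:ℝ)) := by
    rw [← Real.rpow_natCast (N:ℝ) 2, ← Real.rpow_neg hN0.le]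
    norm_num
  have h3 : (N:ℝ) ^ (-(2:ℝ)) ≤ (N:ℝ) ^ (-(3:ℝ)/2) :=
    Real.rpow_le_rpow_of_exponent_le hN1 (by norm_num)
  calc ((K:ℝ) + 1) * Bd
      ≤ ((N:ℝ) * (b + 1)) * (60 * V ^ 3 * ((N:ℝ) * b) ^ 3 / ((N:ℝ) ^ 6 * ε ^ 6)) := by
        rw [hBd_def]
        gcongr
    _ = (60 * V ^ 3 * (b + 1) * b ^ 3 / ε ^ 6) * ((N:ℝ) ^ (-(2:ℝ))) := by rw [hEq, hrp]
    _ ≤ (60 * V ^ 3 * (b + 1) * b ^ 3 / ε ^ 6 + 1) * ((N:ℝ) ^ (-(3:ℝ)/2)) := by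
        refine mul_le_mul (by linarith) h3 (Real.rpow_nonneg hN0.le _) (by positivity)
end

section
/- Under Spohn's geometric increment law, the expected rescaled number of corners converges: lim_{δ→0} lim_{N→∞} (1/(Nδ)) μ_N(C_N(x₀,δ)) = |cos θ₀| · |tan θ₀|/(1 + |tan θ₀|) = |sin(2θ₀)|/(2(|sin θ₀| + |cos θ₀|)), where C_N(x₀,δ) = Σ_{x₀·i ≤ k/N ≤ x₀·i + δ|cos θ₀|} 1_{η(k/N) ≠ 0}. -/
open MeasureTheory Real
open scoped Classical

set_option maxHeartbeats 1000000 in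
/-- under Spohn's geometric increment law, the expected rescaled number
of corners converges:
`lim_{δ→0} lim_{N→∞} (1/(Nδ)) E[C_N(x₀,δ)] = |cos θ₀||tan θ₀|/(1+|tan θ₀|)
  = |sin(2θ₀)|/(2(|sin θ₀|+|cos θ₀|))`,
where `C_N(x₀,δ) = Σ_{c ≤ k/N ≤ c + δ|cos θ₀|} 1_{η(k/N) ≠ 0}` and `c = x₀·i`. -/
theorem expected_corner_density
    {Ω : Type*} [MeasurableSpace Ω] (μ : Measure Ω) [IsProbabilityMeasure μ]
    (a b c θ₀ : ℝ) (hac : a < c) (hcb : c < b)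
    (f : ℝ → ℝ) (hf : ContDiffOn ℝ 1 f (Set.Icc a b))
    (hmono : MonotoneOn f (Set.Icc a b) ∨ AntitoneOn f (Set.Icc a b))
    (hcos : Real.cos θ₀ ≠ 0) (htan : |Real.tan θ₀| = |deriv f c|)
    (η : ℕ → ℤ → Ω → ℝ)
    (hmeas : ∀ N k, Measurable (η N k))
    (hlaw : ∀ N : ℕ, 1 ≤ N → ∀ k : ℤ, (k : ℝ) / N ∈ Set.Ioo a b →
      μ {ω | η N k ω ≠ 0} =
        ENNReal.ofReal (|deriv f ((k : ℝ) / N)| / (1 + |deriv f ((k : ℝ) / N)|))) :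
    ∀ ε > 0, ∃ δ₀ > 0, ∀ δ : ℝ, 0 < δ → δ < δ₀ → ∃ N₀ : ℕ, ∀ N : ℕ, N₀ ≤ N →
      |1 / ((N : ℝ) * δ) *
          (∫ ω, ((((Finset.Icc ⌈(N : ℝ) * c⌉ ⌊(N : ℝ) * (c + δ * |Real.cos θ₀|)⌋).filter
              (fun k => η N k ω ≠ 0)).card : ℝ)) ∂μ) -
        |Real.sin (2 * θ₀)| / (2 * (|Real.sin θ₀| + |Real.cos θ₀|))| < ε := by
  intro ε hε
  have hab : a < b := hac.trans hcb
  set h := |Real.cos θ₀| with hh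
  have hhpos : 0 < h := abs_pos.mpr hcos
  -- continuity of `deriv f` at `c`
  have hderivcont : ContinuousAt (deriv f) c := by
    have h1 : ContinuousOn (derivWithin f (Set.Icc a b)) (Set.Icc a b) :=
      hf.continuousOn_derivWithin (uniqueDiffOn_Icc hab) le_rfl
    have h2 : Set.EqOn (derivWithin f (Set.Icc a b)) (deriv f) (Set.Ioo a b) := by
      intro x hx
      exact derivWithin_of_mem_nhds (Icc_mem_nhds hx.1 hx.2)
    have h3 : ContinuousOn (deriv f) (Set.Ioo a b) :=
      (h1.mono Set.Ioo_subset_Icc_self).congr h2.symm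
    exact h3.continuousAt (Ioo_mem_nhds hac hcb)
  set g : ℝ → ℝ := fun x => |deriv f x| / (1 + |deriv f x|) with hgdef
  have hgnonneg : ∀ x, 0 ≤ g x := fun x => div_nonneg (abs_nonneg _) (by positivity)
  have hgle : ∀ x, g x ≤ 1 := by
    intro x
    rw [hgdef]
    simp only
    rw [div_le_one (by positivity)]
    linarith [abs_nonneg (deriv f x)]
  have hgcont : ContinuousAt g c := by
    apply ContinuousAt.div (hderivcont.abs) (continuousAt_const.add hderivcont.abs)
    exact (add_pos_of_pos_of_nonneg one_pos (abs_nonneg _)).ne'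
  -- value of the target constant
  have htargetval : h * g c = |Real.sin (2*θ₀)| / (2 * (|Real.sin θ₀| + |Real.cos θ₀|)) := by
    have hsc : 0 < |Real.sin θ₀| + h := add_pos_of_nonneg_of_pos (abs_nonneg _) hhpos
    have hdc : |deriv f c| = |Real.sin θ₀| / h := by
      rw [← htan, Real.tan_eq_sin_div_cos, abs_div, hh]
    rw [hgdef]
    simp only
    rw [hdc, Real.sin_two_mul, abs_mul, abs_mul, abs_two, ← hh]
    field_simp
    ring
  set ε' := ε / (2*(h+1)) with hε'def
  have hε'pos : 0 < ε' := by positivity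
  obtain ⟨r, hrpos, hr⟩ := Metric.continuousAt_iff.mp hgcont ε' hε'pos
  refine ⟨min r (b - c) / h, div_pos (lt_min hrpos (sub_pos.mpr hcb)) hhpos, ?_⟩
  intro δ hδpos hδlt
  have hδh : δ * h < min r (b - c) := (lt_div_iff₀ hhpos).mp hδlt
  have hδhr : δ * h < r := hδh.trans_le (min_le_left _ _)
  have hδhb : c + δ * h < b := by
    have := hδh.trans_le (min_le_right _ _); linarith
  have hδhpos : 0 < δ * h := mul_pos hδpos hhpos
  refine ⟨max 1 (⌈2*(ε'+1)/(ε*δ)⌉₊ + 1), ?_⟩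
  intro N hN
  have hN1 : 1 ≤ N := le_trans (le_max_left _ _) hN
  have hNpos : (0:ℝ) < N := by exact_mod_cast hN1
  set D := (N:ℝ) * δ with hDdef
  have hD : 0 < D := mul_pos hNpos hδpos
  have hND : 2*(ε'+1)/(ε*δ) < (N:ℝ) := by
    have h1 : ⌈2*(ε'+1)/(ε*δ)⌉₊ + 1 ≤ N := le_trans (le_max_right _ _) hN
    have h2 : (⌈2*(ε'+1)/(ε*δ)⌉₊ : ℝ) < N := by exact_mod_cast Nat.lt_of_succ_le h1
    exact lt_of_le_of_lt (Nat.le_ceil _) h2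
  have hB : ε' + 1 < ε/2 * D := by
    have hεδ : (0:ℝ) < ε * δ := mul_pos hε hδpos
    have h1 : 2*(ε'+1) < (N:ℝ) * (ε*δ) := (div_lt_iff₀ hεδ).mp hND
    have h2 : (N:ℝ)*(ε*δ) = 2*(ε/2*D) := by rw [hDdef]; ring
    linarith
  set C := ⌈(N:ℝ) * c⌉ with hCdef
  set F := ⌊(N:ℝ) * (c + δ * h)⌋ with hFdef
  set I := Finset.Icc C F with hIdef
  have hflo : (N:ℝ)*(c+δ*h) - 1 < (F:ℝ) := Int.sub_one_lt_floor _
  have hfhi : (F:ℝ) ≤ (N:ℝ)*(c+δ*h) := Int.floor_le _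
  have hclo : (N:ℝ)*c ≤ (C:ℝ) := Int.le_ceil _
  have hchi : (C:ℝ) < (N:ℝ)*c + 1 := Int.ceil_lt_add_one _
  have hexp : (N:ℝ)*(c+δ*h) = (N:ℝ)*c + (N:ℝ)*δ*h := by ring
  -- membership facts
  have hmem : ∀ k ∈ I, c ≤ (k:ℝ)/N ∧ (k:ℝ)/N ≤ c + δ*h := by
    intro k hk
    rw [hIdef, Finset.mem_Icc] at hk
    constructor
    · rw [le_div_iff₀ hNpos]
      have : (C:ℝ) ≤ (k:ℝ) := by exact_mod_cast hk.1
      linarith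
    · rw [div_le_iff₀ hNpos]
      have : (k:ℝ) ≤ (F:ℝ) := by exact_mod_cast hk.2
      linarith
  have hIoo : ∀ k ∈ I, (k:ℝ)/N ∈ Set.Ioo a b := by
    intro k hk
    obtain ⟨h1, h2⟩ := hmem k hk
    exact ⟨lt_of_lt_of_le hac h1, lt_of_le_of_lt h2 hδhb⟩
  -- the integral equals a Riemann-type sum
  have hsk : ∀ k : ℤ, MeasurableSet {ω | η N k ω ≠ 0} := by
    intro k
    have : {ω | η N k ω ≠ 0} = (η N k) ⁻¹' ({0}ᶜ) := rfl
    rw [this]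
    exact (hmeas N k) (measurableSet_singleton 0).compl
  have hint : (∫ ω, ((I.filter (fun k => η N k ω ≠ 0)).card : ℝ) ∂μ)
      = ∑ k ∈ I, g ((k:ℝ)/N) := by
    have hrw : ∀ ω, ((I.filter (fun k => η N k ω ≠ 0)).card : ℝ)
        = ∑ k ∈ I, Set.indicator {ω' | η N k ω' ≠ 0} (fun _ => (1:ℝ)) ω := by
      intro ω
      rw [Finset.card_filter]
      push_cast
      refine Finset.sum_congr rfl fun k _ => ?_
      by_cases hk : η N k ω ≠ 0 <;> simp [Set.indicator_apply, hk]
    simp_rw [hrw]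
    rw [MeasureTheory.integral_finset_sum]
    · refine Finset.sum_congr rfl fun k hk => ?_
      have h1 : (fun _ : Ω => (1:ℝ)) = (1 : Ω → ℝ) := rfl
      rw [h1, MeasureTheory.integral_indicator_one (hsk k), measureReal_def, hlaw N hN1 k (hIoo k hk),
        ENNReal.toReal_ofReal (hgnonneg ((k:ℝ)/N))]
    · intro k _
      rw [MeasureTheory.integrable_indicator_iff (hsk k)]
      exact integrableOn_const (measure_ne_top μ _)
  -- cardinality bounds
  have hcardub : (I.card : ℝ) ≤ D*h + 1 := by
    rcases le_or_gt C F with hCF | hCF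
    · have h0 : (0:ℤ) ≤ F + 1 - C := by omega
      have h1 : (I.card : ℤ) = F + 1 - C := by
        rw [hIdef, Int.card_Icc, Int.toNat_of_nonneg h0]
      have hc : (I.card : ℝ) = (F:ℝ) + 1 - (C:ℝ) := by exact_mod_cast h1
      rw [hc, hDdef]
      linarith
    · have hc : I.card = 0 := by
        rw [hIdef, Finset.card_eq_zero]
        exact Finset.Icc_eq_empty (not_le.mpr hCF)
      rw [hc]
      have : (0:ℝ) < D*h := mul_pos hD hhpos
      simp only [Nat.cast_zero]
      linarith
  have hcardlb : D*h - 1 ≤ (I.card : ℝ) := by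
    rcases le_or_gt C F with hCF | hCF
    · have h0 : (0:ℤ) ≤ F + 1 - C := by omega
      have h1 : (I.card : ℤ) = F + 1 - C := by
        rw [hIdef, Int.card_Icc, Int.toNat_of_nonneg h0]
      have hc : (I.card : ℝ) = (F:ℝ) + 1 - (C:ℝ) := by exact_mod_cast h1
      rw [hc, hDdef]
      linarith
    · have hc : I.card = 0 := by
        rw [hIdef, Finset.card_eq_zero]
        exact Finset.Icc_eq_empty (not_le.mpr hCF)
      rw [hc]
      have hFC : (F:ℝ) + 1 ≤ (C:ℝ) := by exact_mod_cast hCF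
      simp only [Nat.cast_zero]
      rw [hDdef]
      linarith
  -- deviation bound on each term
  have hdev : ∀ k ∈ I, |g ((k:ℝ)/N) - g c| ≤ ε' := by
    intro k hk
    obtain ⟨h1, h2⟩ := hmem k hk
    have hdist : dist ((k:ℝ)/N) c < r := by
      rw [Real.dist_eq, abs_of_nonneg (by linarith)]
      linarith
    have := hr hdist
    rw [Real.dist_eq] at this
    exact this.le
  have hS1 : |∑ k ∈ I, g ((k:ℝ)/N) - (I.card : ℝ) * g c| ≤ (I.card : ℝ) * ε' := by
    have heq : ∑ k ∈ I, g ((k:ℝ)/N) - (I.card : ℝ) * g c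
        = ∑ k ∈ I, (g ((k:ℝ)/N) - g c) := by
      rw [Finset.sum_sub_distrib, Finset.sum_const, nsmul_eq_mul]
    rw [heq]
    calc |∑ k ∈ I, (g ((k:ℝ)/N) - g c)| ≤ ∑ k ∈ I, |g ((k:ℝ)/N) - g c| :=
          Finset.abs_sum_le_sum_abs _ _
      _ ≤ ∑ _k ∈ I, ε' := Finset.sum_le_sum hdev
      _ = (I.card : ℝ) * ε' := by rw [Finset.sum_const, nsmul_eq_mul]
  -- conclusion
  rw [← htargetval]
  have hfinal : 1/D * (∑ k ∈ I, g ((k:ℝ)/N)) - h * g c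
      = (∑ k ∈ I, g ((k:ℝ)/N) - D * (h * g c)) / D := by
    field_simp
  rw [hint, hfinal, abs_div, abs_of_pos hD, div_lt_iff₀ hD]
  have tri : |∑ k ∈ I, g ((k:ℝ)/N) - D * (h * g c)|
      ≤ |∑ k ∈ I, g ((k:ℝ)/N) - (I.card : ℝ) * g c|
        + |(I.card : ℝ) * g c - D * (h * g c)| := abs_sub_le _ _ _
  have h2 : |(I.card : ℝ) * g c - D * (h * g c)| ≤ 1 := by
    have heq : (I.card : ℝ) * g c - D * (h * g c) = g c * ((I.card : ℝ) - D*h) := by ring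
    rw [heq, abs_mul, abs_of_nonneg (hgnonneg c)]
    have habs : |(I.card : ℝ) - D*h| ≤ 1 := abs_le.mpr ⟨by linarith, by linarith⟩
    nlinarith [hgle c, hgnonneg c, abs_nonneg ((I.card : ℝ) - D*h)]
  have hn_ub : (I.card : ℝ) * ε' ≤ (D*h + 1) * ε' :=
    mul_le_mul_of_nonneg_right hcardub hε'pos.le
  have hε2 : h * ε' < ε/2 := by
    have hhalf : ε/2 = ε' * (h+1) := by
      rw [hε'def]; field_simp
    nlinarith [hε'pos]
  have hA : D * (h * ε') < D * (ε/2) := mul_lt_mul_of_pos_left hε2 hD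
  have hid : (D*h + 1) * ε' = D * (h * ε') + ε' := by ring
  linarith [tri, hS1, h2, hn_ub, hA, hB, hid]
end
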